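/- arXiv:math/0304065 — 7 statements merged into one kernel-verified Lean document; each statement's English description precedes it below -/
import Mathlib

section
/- Let G be a topological group and U a symmetric open neighborhood of the identity. For every n ≥ 0, any set K with Uⁿ ⊆ K ⊆ U^{n+1} is U-connected; i.e., there is no subset A with ∅ ≠ A ≠ K and A·U ∩ K = A. -/
/-!
If `A * U ∩ K = A` and `U` is symmetric, then membership in `A` is preserved by every step
`x ↦ x * u` with `u ∈ U` that stays inside `K`. Every point of `K ⊆ U ^ (n + 1)` is reached from `1`
by `n + 1` such steps, whose intermediate points lie in `U ^ n ⊆ K`; so `A` contains either all of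
`K` or none of it.
-/

open Set Pointwise

namespace Set

variable {G : Type*} [Group G] {U A K : Set G}

theorem mem_iff_mul_mem_of_mul_inter_eq (hUsymm : U⁻¹ = U) (hA : A * U ∩ K = A)
    {x u : G} (hx : x ∈ K) (hu : u ∈ U) (hxu : x * u ∈ K) : x ∈ A ↔ x * u ∈ A := by
  constructor
  · intro hxA
    rw [← hA]
    exact ⟨mul_mem_mul hxA hu, hxu⟩
  · intro hxuA
    have hu' : u⁻¹ ∈ U := by rw [← hUsymm]; exact inv_mem_inv.mpr hu
    rw [← hA]
    exact ⟨⟨x * u, hxuA, u⁻¹, hu', mul_inv_cancel_right x u⟩, hx⟩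

theorem one_mem_iff_mem_of_mul_inter_eq (hUone : (1 : G) ∈ U) (hUsymm : U⁻¹ = U)
    (hA : A * U ∩ K = A) {m : ℕ} (hK : U ^ m ⊆ K) {x : G} (hx : x ∈ U ^ (m + 1))
    (hxK : x ∈ K) : (1 : G) ∈ A ↔ x ∈ A := by
  induction m generalizing x with
  | zero =>
    rw [pow_one] at hx
    simpa using mem_iff_mul_mem_of_mul_inter_eq hUsymm hA (hK one_mem_one) hx (by simpa)
  | succ m ih =>
    obtain ⟨y, hy, u, hu, rfl⟩ := (pow_succ U (m + 1)) ▸ hx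
    have hyK : y ∈ K := hK hy
    rw [ih ((pow_subset_pow_right hUone m.le_succ).trans hK) hy hyK]
    exact mem_iff_mul_mem_of_mul_inter_eq hUsymm hA hyK hu hxK

theorem eq_of_mul_inter_eq_of_pow_subset (hUone : (1 : G) ∈ U) (hUsymm : U⁻¹ = U)
    (hA : A * U ∩ K = A) (hAne : A.Nonempty) {n : ℕ} (hK₁ : U ^ n ⊆ K)
    (hK₂ : K ⊆ U ^ (n + 1)) : A = K := by
  have hAK : A ⊆ K := hA ▸ inter_subset_right
  obtain ⟨a, ha⟩ := hAne
  have h1A : (1 : G) ∈ A :=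
    (one_mem_iff_mem_of_mul_inter_eq hUone hUsymm hA hK₁ (hK₂ (hAK ha)) (hAK ha)).mpr ha
  exact hAK.antisymm fun x hx =>
    (one_mem_iff_mem_of_mul_inter_eq hUone hUsymm hA hK₁ (hK₂ hx) hx).mp h1A

end Set

theorem stmt_2_general {G : Type*} [Group G]
    (U : Set G) (hUone : (1 : G) ∈ U) (hUsymm : U⁻¹ = U)
    (n : ℕ) (K : Set G) (hK₁ : U ^ n ⊆ K) (hK₂ : K ⊆ U ^ (n + 1)) :
    ¬ ∃ A : Set G, A ≠ ∅ ∧ A ≠ K ∧ A * U ∩ K = A := by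
  rintro ⟨A, hAne, hAK, hA⟩
  exact hAK (eq_of_mul_inter_eq_of_pow_subset hUone hUsymm hA
    (nonempty_iff_ne_empty.mpr hAne) hK₁ hK₂)

theorem stmt_2 {G : Type*} [Group G] [TopologicalSpace G] [IsTopologicalGroup G]
    (U : Set G) (hUopen : IsOpen U) (hUone : (1 : G) ∈ U) (hUsymm : U⁻¹ = U)
    (n : ℕ) (K : Set G) (hK₁ : U ^ n ⊆ K) (hK₂ : K ⊆ U ^ (n + 1)) :
    ¬ ∃ A : Set G, A ≠ ∅ ∧ A ≠ K ∧ A * U ∩ K = A :=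
  stmt_2_general U hUone hUsymm n K hK₁ hK₂
end

section
/- Let G be a non-discrete locally compact group with Haar measure ν, U a symmetric open neighborhood of the identity, and A ⊆ G. If there exists a coset g·Γ(U) of the subgroup Γ(U) = ⋃_{n≥1}Uⁿ such that g·Γ(U) ∩ A ≠ ∅ and g·Γ(U) \ cl(A) ≠ ∅, then ν(cl(A)) < ν(A·U), provided ν(cl(A)) < ∞. -/
/-! Since `U` is a symmetric neighbourhood of `1`, `closure A ⊆ A * U`, so it suffices to find a
point of the open set `A * U \ closure A`, which then has positive Haar measure. If there were none,
then `closure A * U = A * U ⊆ closure A` (as `U` is open), so `closure A` would be stable under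
right multiplication by `Γ(U)`, i.e. a union of left cosets of `Γ(U)`; but the coset `g • Γ(U)`
meets `A` without being contained in `closure A`. -/

open MeasureTheory Set Pointwise

section Monoid

variable {M : Type*} [Monoid M]

theorem Set.mul_pow_subset_of_mul_subset {s t : Set M} (h : s * t ⊆ s) (n : ℕ) :
    s * t ^ n ⊆ s := by
  induction n with
  | zero => simp
  | succ n ih =>
    rw [pow_succ, ← mul_assoc]
    exact (mul_subset_mul_right ih).trans h

theorem Set.mul_iUnion_pow_succ_subset {s t : Set M} (h : s * t ⊆ s) :
    s * ⋃ n : ℕ, t ^ (n + 1) ⊆ s := by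
  rw [mul_iUnion]
  exact iUnion_subset fun n ↦ mul_pow_subset_of_mul_subset h (n + 1)

end Monoid

section Group

variable {G : Type*} [Group G]

theorem Set.inv_mul_mem_iUnion_pow_succ_of_mem_smul {U : Set G} (hU : U⁻¹ = U) {g a b : G}
    (ha : a ∈ g • ⋃ n : ℕ, U ^ (n + 1)) (hb : b ∈ g • ⋃ n : ℕ, U ^ (n + 1)) :
    a⁻¹ * b ∈ ⋃ n : ℕ, U ^ (n + 1) := by
  obtain ⟨s, hs, rfl⟩ := ha
  obtain ⟨t, ht, rfl⟩ := hb
  obtain ⟨m, hsm⟩ := mem_iUnion.mp hs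
  obtain ⟨n, htn⟩ := mem_iUnion.mp ht
  have hsinv : s⁻¹ ∈ U ^ (m + 1) := by
    rw [← hU, inv_pow]
    exact inv_mem_inv.mpr hsm
  refine mem_iUnion.mpr ⟨m + 1 + n, ?_⟩
  show (g * s)⁻¹ * (g * t) ∈ U ^ (m + 1 + (n + 1))
  rw [mul_inv_rev, mul_assoc, inv_mul_cancel_left, pow_add]
  exact mul_mem_mul hsinv htn

variable [TopologicalSpace G] [IsTopologicalGroup G]

theorem closure_mul_iUnion_pow_succ_subset {A U : Set G} (hU : IsOpen U)
    (h : A * U ⊆ closure A) : closure A * ⋃ n : ℕ, U ^ (n + 1) ⊆ closure A :=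
  mul_iUnion_pow_succ_subset (by rwa [hU.closure_mul])

end Group

theorem MeasureTheory.measure_lt_of_subset_of_isOpen_sdiff {X : Type*} [TopologicalSpace X]
    [MeasurableSpace X] [OpensMeasurableSpace X] {μ : Measure X} [μ.IsOpenPosMeasure]
    {s t : Set X} (hs : IsClosed s) (hst : s ⊆ t) (hμs : μ s ≠ ⊤) (ho : IsOpen (t \ s))
    (hne : (t \ s).Nonempty) : μ s < μ t :=
  calc μ s < μ s + μ (t \ s) := ENNReal.lt_add_right hμs (ho.measure_pos μ hne).ne'
    _ = μ t := by rw [measure_add_sdiff hs.measurableSet.nullMeasurableSet, union_eq_right.mpr hst]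

theorem stmt_5_general {G : Type*} [Group G] [TopologicalSpace G] [IsTopologicalGroup G]
    [MeasurableSpace G] [BorelSpace G]
    (ν : Measure G) [ν.IsHaarMeasure]
    (U : Set G) (hUopen : IsOpen U) (hUone : (1 : G) ∈ U) (hUsymm : U⁻¹ = U)
    (A : Set G)
    (hcoset : ∃ g : G, ((g • ⋃ n : ℕ, U ^ (n + 1)) ∩ A).Nonempty ∧
      ((g • ⋃ n : ℕ, U ^ (n + 1)) \ closure A).Nonempty)
    (hfin : ν (closure A) < ⊤) :
    ν (closure A) < ν (A * U) := by
  obtain ⟨g, ⟨a, haΓ, haA⟩, ⟨b, hbΓ, hbA⟩⟩ := hcoset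
  have hsub : closure A ⊆ A * U :=
    closure_subset_mul_right_of_mem_nhds_one_of_inv A (hUopen.mem_nhds hUone)
      fun x hx ↦ by rw [← hUsymm]; exact inv_mem_inv.mpr hx
  refine measure_lt_of_subset_of_isOpen_sdiff isClosed_closure hsub hfin.ne
    (hUopen.mul_left.sdiff isClosed_closure) ?_
  by_contra hempty
  rw [not_nonempty_iff_eq_empty, sdiff_eq_empty] at hempty
  exact hbA (closure_mul_iUnion_pow_succ_subset hUopen hempty ⟨a, subset_closure haA, a⁻¹ * b,
    inv_mul_mem_iUnion_pow_succ_of_mem_smul hUsymm haΓ hbΓ, mul_inv_cancel_left a b⟩)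

theorem stmt_5 {G : Type*} [Group G] [TopologicalSpace G] [IsTopologicalGroup G]
    [LocallyCompactSpace G] [MeasurableSpace G] [BorelSpace G]
    (hG : ¬ DiscreteTopology G)
    (ν : Measure G) [ν.IsHaarMeasure]
    (U : Set G) (hUopen : IsOpen U) (hUone : (1 : G) ∈ U) (hUsymm : U⁻¹ = U)
    (A : Set G)
    (hcoset : ∃ g : G, ((g • ⋃ n : ℕ, U ^ (n + 1)) ∩ A).Nonempty ∧
      ((g • ⋃ n : ℕ, U ^ (n + 1)) \ closure A).Nonempty)
    (hfin : ν (closure A) < ⊤) :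
    ν (closure A) < ν (A * U) :=
  stmt_5_general ν U hUopen hUone hUsymm A hcoset hfin
end

section
/- (Rado's measurable marriage theorem, finite version) Let (S,μ) be a measurable space with a finite non-atomic measure, S₁,…,Sₙ measurable subsets with ⋃ᵢ Sᵢ = S, and ε₁,…,εₙ > 0 with ∑ᵢ εᵢ = μ(S). Then there exists a measurable partition {P₁,…,Pₙ} of S with Pᵢ ⊆ Sᵢ and μ(Pᵢ) = εᵢ for all i, if and only if for every I ⊆ {1,…,n}, μ(⋃_{i∈I} Sᵢ) ≥ ∑_{i∈I} εᵢ. -/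
open MeasureTheory Set
open scoped ENNReal NNReal

/-! ### Part 1: a Sierpiński-type theorem for measures without atoms
(in the sense of the splitting property). -/

section Sierpinski

variable {S : Type*} [MeasurableSpace S] (μ : Measure S) [IsFiniteMeasure μ]

theorem rado_half
    (hnonatomic : ∀ A : Set S, MeasurableSet A → 0 < μ A →
      ∃ B ⊆ A, MeasurableSet B ∧ 0 < μ B ∧ μ B < μ A) :
    ∀ A : Set S, MeasurableSet A → 0 < μ A →
      ∃ B ⊆ A, MeasurableSet B ∧ 0 < μ B ∧ 2 * μ B ≤ μ A := by
  intro A hA hpos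
  obtain ⟨B, hBA, hBm, hB0, hBlt⟩ := hnonatomic A hA hpos
  have hAB : μ B + μ (A \ B) = μ A := by
    rw [measure_add_diff hBm.nullMeasurableSet A, union_eq_self_of_subset_left hBA]
  have hd0 : 0 < μ (A \ B) := by
    rcases eq_or_lt_of_le ((zero_le : (0:ℝ≥0∞) ≤ μ (A \ B))) with h | h
    · exfalso; rw [← h, add_zero] at hAB; exact absurd hAB (ne_of_lt hBlt)
    · exact h
  rcases le_total (μ B) (μ (A \ B)) with h | h
  · exact ⟨B, hBA, hBm, hB0, by rw [two_mul, ← hAB]; exact add_le_add le_rfl h⟩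
  · exact ⟨A \ B, diff_subset, hA.diff hBm, hd0, by rw [two_mul, ← hAB]; exact add_le_add h le_rfl⟩

theorem rado_small
    (hnonatomic : ∀ A : Set S, MeasurableSet A → 0 < μ A →
      ∃ B ⊆ A, MeasurableSet B ∧ 0 < μ B ∧ μ B < μ A) :
    ∀ A : Set S, MeasurableSet A → 0 < μ A → ∀ δ : ℝ≥0∞, 0 < δ →
      ∃ B ⊆ A, MeasurableSet B ∧ 0 < μ B ∧ μ B ≤ δ := by
  intro A hA hpos δ hδ
  have key : ∀ k : ℕ, ∃ B ⊆ A, MeasurableSet B ∧ 0 < μ B ∧ 2 ^ k * μ B ≤ μ A := by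
    intro k
    induction k with
    | zero => exact ⟨A, Subset.rfl, hA, hpos, by simp⟩
    | succ k ih =>
      obtain ⟨B, hBA, hBm, hB0, hBle⟩ := ih
      obtain ⟨C, hCB, hCm, hC0, hCle⟩ := rado_half μ hnonatomic B hBm hB0
      refine ⟨C, hCB.trans hBA, hCm, hC0, ?_⟩
      calc 2 ^ (k + 1) * μ C = 2 ^ k * (2 * μ C) := by ring
      _ ≤ 2 ^ k * μ B := by exact mul_le_mul_right hCle _
      _ ≤ μ A := hBle
  rcases eq_or_ne δ ⊤ with rfl | hδtop
  · obtain ⟨B, h1, h2, h3, _⟩ := key 0; exact ⟨B, h1, h2, h3, le_top⟩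
  have hfin : μ A / δ ≠ ⊤ := by
    exact (ENNReal.div_lt_top (measure_ne_top μ A) (ne_of_gt hδ)).ne
  obtain ⟨k, hk⟩ := ENNReal.exists_nat_gt hfin
  have hk2 : μ A / δ < 2 ^ k := lt_of_lt_of_le hk (by exact_mod_cast Nat.cast_le.mpr (Nat.lt_two_pow_self (n := k)).le)
  have hAle : μ A ≤ 2 ^ k * δ := by
    rw [ENNReal.div_lt_iff (Or.inl (ne_of_gt hδ)) (Or.inl hδtop)] at hk2
    exact hk2.le
  obtain ⟨B, hBA, hBm, hB0, hBle⟩ := key k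
  refine ⟨B, hBA, hBm, hB0, ?_⟩
  have : 2 ^ k * μ B ≤ 2 ^ k * δ := hBle.trans hAle
  exact (ENNReal.mul_le_mul_iff_right (by positivity) (by simp)).mp this

theorem rado_sierpinski
    (hnonatomic : ∀ A : Set S, MeasurableSet A → 0 < μ A →
      ∃ B ⊆ A, MeasurableSet B ∧ 0 < μ B ∧ μ B < μ A) :
    ∀ A : Set S, MeasurableSet A → ∀ r : ℝ≥0∞, r ≤ μ A →
      ∃ B ⊆ A, MeasurableSet B ∧ μ B = r := by
  intro A hA r hr
  have hrfin : r ≠ ⊤ := (lt_of_le_of_lt hr (measure_lt_top μ A)).ne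
  -- greedy step
  have step : ∀ B : Set S, B ⊆ A → MeasurableSet B → μ B ≤ r →
      ∃ C, C ⊆ A \ B ∧ MeasurableSet C ∧ μ B + μ C ≤ r ∧
        ∀ C', C' ⊆ A \ B → MeasurableSet C' → μ B + μ C' ≤ r → μ C' ≤ 2 * μ C := by
    intro B hBA hBm hBr
    set s : ℝ≥0∞ := ⨆ (C' : Set S) (_ : C' ⊆ A \ B ∧ MeasurableSet C' ∧ μ B + μ C' ≤ r), μ C' with hs
    have hsle : s ≤ r := by
      refine iSup_le fun C' => iSup_le fun hC' => ?_
      exact le_trans (le_add_self) hC'.2.2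
    rcases eq_or_lt_of_le (zero_le : (0:ℝ≥0∞) ≤ s) with h0 | hpos
    · refine ⟨∅, empty_subset _, MeasurableSet.empty, by simpa using hBr, ?_⟩
      intro C' h1 h2 h3
      have : μ C' ≤ s := le_iSup₂_of_le C' ⟨h1, h2, h3⟩ le_rfl
      simp [← h0] at this ⊢
      exact this
    · have hstop : s ≠ ⊤ := (lt_of_le_of_lt hsle hrfin.lt_top).ne
      have hhalf : s / 2 < s := ENNReal.half_lt_self (ne_of_gt hpos) hstop
      rw [hs, lt_iSup_iff] at hhalf
      obtain ⟨C, hC⟩ := hhalf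
      rw [lt_iSup_iff] at hC
      obtain ⟨⟨h1, h2, h3⟩, h4⟩ := hC
      refine ⟨C, h1, h2, h3, fun C' g1 g2 g3 => ?_⟩
      have : μ C' ≤ s := le_iSup₂_of_le C' ⟨g1, g2, g3⟩ le_rfl
      calc μ C' ≤ s := this
      _ = 2 * (s / 2) := by rw [ENNReal.mul_div_cancel' (by norm_num) (by norm_num)]
      _ ≤ 2 * μ C := by exact mul_le_mul_right h4.le _
  choose! C hC1 hC2 hC3 hC4 using step
  -- the greedy sequence
  let g : ℕ → {B : Set S // B ⊆ A ∧ MeasurableSet B ∧ μ B ≤ r} := fun k =>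
    Nat.rec ⟨∅, empty_subset _, MeasurableSet.empty, by simp⟩
      (fun _ p => ⟨p.1 ∪ C p.1,
        union_subset p.2.1 ((hC1 p.1 p.2.1 p.2.2.1 p.2.2.2).trans diff_subset),
        p.2.2.1.union (hC2 p.1 p.2.1 p.2.2.1 p.2.2.2),
        le_trans (measure_union_le _ _) (hC3 p.1 p.2.1 p.2.2.1 p.2.2.2)⟩) k
  have hgsucc : ∀ k, (g (k+1)).1 = (g k).1 ∪ C (g k).1 := fun k => rfl
  have hdisj : ∀ k, Disjoint (g k).1 (C (g k).1) := by
    intro k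
    have := hC1 (g k).1 (g k).2.1 (g k).2.2.1 (g k).2.2.2
    exact disjoint_sdiff_right.mono_right this
  have hgadd : ∀ k, μ (g (k+1)).1 = μ (g k).1 + μ (C (g k).1) := by
    intro k
    rw [hgsucc k, measure_union (hdisj k) (hC2 _ (g k).2.1 (g k).2.2.1 (g k).2.2.2)]
  have hmono : Monotone (fun k => (g k).1) := by
    apply monotone_nat_of_le_succ
    intro k; rw [hgsucc k]; exact subset_union_left
  set B : Set S := ⋃ k, (g k).1 with hB
  have hBA : B ⊆ A := iUnion_subset fun k => (g k).2.1
  have hBm : MeasurableSet B := MeasurableSet.iUnion fun k => (g k).2.2.1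
  have hμB : μ B = ⨆ k, μ (g k).1 := Directed.measure_iUnion (hmono.directed_le)
  have hBler : μ B ≤ r := by rw [hμB]; exact iSup_le fun k => (g k).2.2.2
  refine ⟨B, hBA, hBm, ?_⟩
  by_contra hne
  have hlt : μ B < r := lt_of_le_of_lt (le_of_eq rfl) (lt_of_le_of_ne hBler hne)
  -- leftover has positive measure
  have hdiffpos : 0 < μ (A \ B) := by
    have : μ (A \ B) = μ A - μ B := measure_diff hBA hBm.nullMeasurableSet (measure_ne_top μ B)
    rw [this]
    exact lt_of_lt_of_le (tsub_pos_of_lt hlt) (tsub_le_tsub_right hr _)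
  obtain ⟨C', hC'sub, hC'm, hC'0, hC'le⟩ := rado_small μ hnonatomic (A \ B) (hA.diff hBm)
    hdiffpos (r - μ B) (tsub_pos_of_lt hlt)
  -- C' certifies s_k ≥ μ C' for all k
  have hkey : ∀ k, μ C' ≤ 2 * μ (C (g k).1) := by
    intro k
    apply hC4 (g k).1 (g k).2.1 (g k).2.2.1 (g k).2.2.2 C'
    · exact hC'sub.trans (diff_subset_diff_right (le_iSup (fun k => (g k).1) k))
    · exact hC'm
    · calc μ (g k).1 + μ C' ≤ μ B + (r - μ B) :=
            add_le_add (by rw [hμB]; exact le_iSup (fun k => μ (g k).1) k) hC'le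
      _ = r := add_tsub_cancel_of_le hlt.le
  set d : ℝ≥0∞ := μ C' / 2 with hd
  have hd0 : 0 < d := ENNReal.half_pos (ne_of_gt hC'0)
  have hdtop : d ≠ ⊤ := by
    have : μ C' ≠ ⊤ := measure_ne_top μ C'
    simp [hd, ENNReal.div_eq_top, this]
  have hdle : ∀ k, d ≤ μ (C (g k).1) := by
    intro k
    rw [hd, ENNReal.div_le_iff_le_mul (by norm_num) (by norm_num)]
    calc μ C' ≤ 2 * μ (C (g k).1) := hkey k
    _ = _ := by ring
  have hgrow : ∀ k : ℕ, (k : ℝ≥0∞) * d ≤ μ (g k).1 := by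
    intro k
    induction k with
    | zero => simp
    | succ k ih =>
      rw [hgadd k]
      push_cast
      rw [add_mul, one_mul]
      exact add_le_add ih (hdle k)
  obtain ⟨k, hk⟩ := ENNReal.exists_nat_gt ((ENNReal.div_lt_top hrfin (ne_of_gt hd0)).ne : r / d ≠ ⊤)
  rw [ENNReal.div_lt_iff (Or.inl (ne_of_gt hd0)) (Or.inl hdtop)] at hk
  exact absurd ((hgrow k).trans ((g k).2.2.2)) (not_le.mpr hk)


end Sierpinski

/-! ### Part 2: a finite transportation/flow feasibility theorem (weighted Hall). -/

section Flow

variable {ι : Type*} [Fintype ι] [DecidableEq ι]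

/-- capacity available to a set `I` of sinks -/
noncomputable def radoCapsum (c : Finset ι → ℝ≥0) (I : Finset ι) : ℝ≥0 :=
  ∑ A ∈ Finset.univ.filter (fun A => (A ∩ I).Nonempty), c A

def radoHall (D : Finset ι) (η : ι → ℝ≥0) (c : Finset ι → ℝ≥0) : Prop :=
  ∀ I ⊆ D, ∑ i ∈ I, η i ≤ radoCapsum c I

def radoFeasible (D : Finset ι) (η : ι → ℝ≥0) (c : Finset ι → ℝ≥0) : Prop :=
  ∃ x : ι → Finset ι → ℝ≥0,
    (∀ i A, x i A ≠ 0 → i ∈ D ∧ i ∈ A) ∧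
    (∀ i ∈ D, ∑ A, x i A = η i) ∧
    (∀ A, ∑ i, x i A ≤ c A)

lemma radoHall.mono {D D' : Finset ι} {η c} (h : radoHall D η c) (hsub : D' ⊆ D) :
    radoHall D' η c := fun I hI => h I (hI.trans hsub)

lemma radoFeasible.extend_zero {D : Finset ι} {i₀ : ι} {η c}
    (h0 : η i₀ = 0) (hfe : radoFeasible (D.erase i₀) η c) : radoFeasible D η c := by
  obtain ⟨x, hsupp, hsum, hcap⟩ := hfe
  refine ⟨x, fun i A h => ⟨Finset.mem_of_mem_erase (hsupp i A h).1, (hsupp i A h).2⟩, ?_, hcap⟩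
  intro i hi
  by_cases hii : i = i₀
  · subst hii
    rw [h0]
    apply Finset.sum_eq_zero
    intro A _
    by_contra hne
    exact (Finset.notMem_erase i D) (hsupp i A hne).1
  · exact hsum i (Finset.mem_erase.mpr ⟨hii, hi⟩)

lemma radoFeasible.augment {D : Finset ι} {i₀ : ι} {A₀ : Finset ι} {η c} {t : ℝ≥0}
    (hi₀D : i₀ ∈ D) (hi₀A : i₀ ∈ A₀) (ht1 : t ≤ η i₀) (ht2 : t ≤ c A₀)
    (hfe : radoFeasible D (Function.update η i₀ (η i₀ - t)) (Function.update c A₀ (c A₀ - t))) :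
    radoFeasible D η c := by
  obtain ⟨x, hsupp, hsum, hcap⟩ := hfe
  refine ⟨fun i A => x i A + if i = i₀ ∧ A = A₀ then t else 0, fun i A h => ?_, ?_, ?_⟩
  · dsimp only at h
    by_cases hx : x i A ≠ 0
    · exact hsupp i A hx
    · push_neg at hx
      rw [hx, zero_add] at h
      have hc : i = i₀ ∧ A = A₀ := by
        by_contra hc; rw [if_neg hc] at h; exact h rfl
      exact hc.1 ▸ hc.2 ▸ ⟨hi₀D, hi₀A⟩
  · intro i hi
    dsimp only
    rw [Finset.sum_add_distrib]
    by_cases hii : i = i₀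
    · subst hii
      have h1 : ∑ A, x i A = η i - t := by rw [hsum i hi, Function.update_self]
      have h2 : (∑ A : Finset ι, if i = i ∧ A = A₀ then t else 0) = t := by simp
      rw [h1, h2, tsub_add_cancel_of_le ht1]
    · have h2 : (∑ A : Finset ι, if i = i₀ ∧ A = A₀ then t else 0) = 0 := by
        apply Finset.sum_eq_zero; intro A _; rw [if_neg (fun hc => hii hc.1)]
      rw [h2, add_zero, hsum i hi, Function.update_of_ne hii]
  · intro A
    dsimp only
    rw [Finset.sum_add_distrib]
    by_cases hAA : A = A₀
    · subst hAA
      have h2 : (∑ i, if i = i₀ ∧ A = A then t else 0) = t := by simp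
      rw [h2]
      calc (∑ i, x i A) + t ≤ (c A - t) + t := by
            exact add_le_add_left (by simpa [Function.update_self] using hcap A) t
      _ = c A := tsub_add_cancel_of_le ht2
    · have h2 : (∑ i, if i = i₀ ∧ A = A₀ then t else 0) = 0 := by
        apply Finset.sum_eq_zero; intro i _; rw [if_neg (fun hc => hAA hc.2)]
      rw [h2, add_zero]
      simpa [Function.update_of_ne hAA] using hcap A

lemma radoCapsum_update_of_mem {c : Finset ι → ℝ≥0} {A₀ : Finset ι} {t : ℝ≥0} {I : Finset ι}
    (hAI : (A₀ ∩ I).Nonempty) (ht : t ≤ c A₀) :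
    radoCapsum (Function.update c A₀ (c A₀ - t)) I + t = radoCapsum c I := by
  unfold radoCapsum
  have hA₀mem : A₀ ∈ Finset.univ.filter (fun A => (A ∩ I).Nonempty) := by
    simp [hAI]
  rw [Finset.sum_update_of_mem hA₀mem, Finset.sdiff_singleton_eq_erase, add_right_comm,
    tsub_add_cancel_of_le ht, Finset.add_sum_erase _ c hA₀mem]

lemma radoCapsum_update_of_not_mem {c : Finset ι → ℝ≥0} {A₀ : Finset ι} {v : ℝ≥0} {I : Finset ι}
    (hAI : ¬(A₀ ∩ I).Nonempty) :
    radoCapsum (Function.update c A₀ v) I = radoCapsum c I := by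
  unfold radoCapsum
  apply Finset.sum_congr rfl
  intro A hA
  have : A ≠ A₀ := by
    rintro rfl
    exact hAI (Finset.mem_filter.mp hA).2
  rw [Function.update_of_ne this]

lemma rado_hall_update {D : Finset ι} {i₀ : ι} {A₀ : Finset ι} {η c} {t : ℝ≥0}
    (hi₀A₀ : i₀ ∈ A₀) (ht_η : t ≤ η i₀) (ht_c : t ≤ c A₀)
    (hslack : ∀ I ⊆ D.erase i₀, I.Nonempty → (A₀ ∩ I).Nonempty →
      (∑ i ∈ I, η i) + t ≤ radoCapsum c I)
    (hHall : radoHall D η c) :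
    radoHall D (Function.update η i₀ (η i₀ - t)) (Function.update c A₀ (c A₀ - t)) := by
  intro I hID
  by_cases hi₀I : i₀ ∈ I
  · have hAI : (A₀ ∩ I).Nonempty := ⟨i₀, Finset.mem_inter.mpr ⟨hi₀A₀, hi₀I⟩⟩
    have hηsum : (∑ i ∈ I, Function.update η i₀ (η i₀ - t) i) + t = ∑ i ∈ I, η i := by
      rw [Finset.sum_update_of_mem hi₀I, Finset.sdiff_singleton_eq_erase, add_right_comm,
        tsub_add_cancel_of_le ht_η, Finset.add_sum_erase _ η hi₀I]
    have h := hHall I hID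
    rw [← radoCapsum_update_of_mem hAI ht_c, ← hηsum] at h
    exact le_of_add_le_add_right h
  · have hηsum : (∑ i ∈ I, Function.update η i₀ (η i₀ - t) i) = ∑ i ∈ I, η i := by
      apply Finset.sum_congr rfl
      intro i hi
      exact Function.update_of_ne (by rintro rfl; exact hi₀I hi) _ _
    rw [hηsum]
    by_cases hAI : (A₀ ∩ I).Nonempty
    · have hIne : I.Nonempty := by
        obtain ⟨a, ha⟩ := hAI
        exact ⟨a, (Finset.mem_inter.mp ha).2⟩
      have hIsub : I ⊆ D.erase i₀ := fun a ha =>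
        Finset.mem_erase.mpr ⟨by rintro rfl; exact hi₀I ha, hID ha⟩
      have h := hslack I hIsub hIne hAI
      rw [← radoCapsum_update_of_mem hAI ht_c] at h
      exact le_of_add_le_add_right h
    · rw [radoCapsum_update_of_not_mem hAI]
      exact hHall I hID


lemma radoCapsum_union (c : Finset ι → ℝ≥0) (I J : Finset ι) :
    radoCapsum c (I ∪ J)
      = radoCapsum c I + radoCapsum (fun A => if (A ∩ I).Nonempty then 0 else c A) J := by
  unfold radoCapsum
  rw [← Finset.sum_filter_add_sum_filter_not
    (Finset.univ.filter (fun A => (A ∩ (I ∪ J)).Nonempty)) (fun A => (A ∩ I).Nonempty)]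
  congr 1
  · rw [Finset.filter_filter]
    apply Finset.sum_congr _ (fun _ _ => rfl)
    apply Finset.filter_congr
    intro A _
    constructor
    · rintro ⟨h1, h2⟩; exact h2
    · intro h
      obtain ⟨a, ha⟩ := h
      exact ⟨⟨a, Finset.mem_inter.mpr ⟨(Finset.mem_inter.mp ha).1,
        Finset.mem_union_left _ (Finset.mem_inter.mp ha).2⟩⟩, ⟨a, ha⟩⟩
  · rw [Finset.filter_filter, Finset.sum_filter, Finset.sum_filter]
    apply Finset.sum_congr rfl
    intro A _
    have hiff : (A ∩ (I ∪ J)).Nonempty ↔ (A ∩ I).Nonempty ∨ (A ∩ J).Nonempty := by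
      rw [Finset.inter_union_distrib_left]
      constructor
      · rintro ⟨a, ha⟩
        rcases Finset.mem_union.mp ha with h | h
        · exact Or.inl ⟨a, h⟩
        · exact Or.inr ⟨a, h⟩
      · rintro (⟨a, ha⟩ | ⟨a, ha⟩)
        · exact ⟨a, Finset.mem_union_left _ ha⟩
        · exact ⟨a, Finset.mem_union_right _ ha⟩
    by_cases h1 : (A ∩ I).Nonempty <;> by_cases h2 : (A ∩ J).Nonempty <;>
      simp [h1, h2, hiff]

/-- The splitting step: a tight proper subset lets us split the problem in two. -/
lemma rado_split {D I : Finset ι} {η : ι → ℝ≥0} {c : Finset ι → ℝ≥0}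
    (hID : I ⊂ D) (hne : I.Nonempty)
    (htight : ∑ i ∈ I, η i = radoCapsum c I) (hHall : radoHall D η c)
    (IH : ∀ t ⊂ D, ∀ (η : ι → ℝ≥0) (c : Finset ι → ℝ≥0), radoHall t η c → radoFeasible t η c) :
    radoFeasible D η c := by
  set c'' : Finset ι → ℝ≥0 := fun A => if (A ∩ I).Nonempty then 0 else c A with hc''
  obtain ⟨x₁, hs₁, hη₁, hc₁⟩ := IH I hID η c (hHall.mono hID.subset)
  have hHall₂ : radoHall (D \ I) η c'' := by
    intro J hJ
    have hdisj : Disjoint I J := by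
      refine Finset.disjoint_left.mpr fun a haI haJ => ?_
      exact (Finset.mem_sdiff.mp (hJ haJ)).2 haI
    have h := hHall (I ∪ J) (Finset.union_subset hID.subset
      (hJ.trans (Finset.sdiff_subset)))
    rw [Finset.sum_union hdisj, radoCapsum_union c I J, htight] at h
    exact le_of_add_le_add_left h
  obtain ⟨x₂, hs₂, hη₂, hc₂⟩ := IH (D \ I)
    (Finset.sdiff_ssubset hID.subset hne) η c'' hHall₂
  refine ⟨fun i A => x₁ i A + x₂ i A, ?_, ?_, ?_⟩
  · intro i A h
    dsimp only at h
    by_cases h1 : x₁ i A ≠ 0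
    · exact ⟨hID.subset (hs₁ i A h1).1, (hs₁ i A h1).2⟩
    · push_neg at h1
      rw [h1, zero_add] at h
      exact ⟨Finset.sdiff_subset (hs₂ i A h).1, (hs₂ i A h).2⟩
  · intro i hi
    rw [Finset.sum_add_distrib]
    by_cases hiI : i ∈ I
    · rw [hη₁ i hiI]
      have : ∑ A, x₂ i A = 0 := Finset.sum_eq_zero fun A _ => by
        by_contra hne2
        exact (Finset.mem_sdiff.mp (hs₂ i A hne2).1).2 hiI
      rw [this, add_zero]
    · rw [hη₂ i (Finset.mem_sdiff.mpr ⟨hi, hiI⟩)]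
      have : ∑ A, x₁ i A = 0 := Finset.sum_eq_zero fun A _ => by
        by_contra hne2
        exact hiI (hs₁ i A hne2).1
      rw [this, zero_add]
  · intro A
    rw [Finset.sum_add_distrib]
    by_cases hAI : (A ∩ I).Nonempty
    · have h2 : ∑ i, x₂ i A ≤ 0 := by
        have := hc₂ A
        rw [hc''] at this
        simp only [if_pos hAI] at this
        exact this
      calc ∑ i, x₁ i A + ∑ i, x₂ i A ≤ c A + 0 := add_le_add (hc₁ A) h2
      _ = c A := add_zero _
    · have h1 : ∑ i, x₁ i A = 0 := Finset.sum_eq_zero fun i _ => by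
        by_contra hne2
        exact hAI ⟨i, Finset.mem_inter.mpr ⟨(hs₁ i A hne2).2, (hs₁ i A hne2).1⟩⟩
      rw [h1, zero_add]
      have := hc₂ A
      rw [hc''] at this
      simp only [if_neg hAI] at this
      exact this

/-- Inner loop: route the demand of sink `i₀` through the available cells `ℬ`. -/
lemma rado_inner (D : Finset ι) (i₀ : ι) (hi₀ : i₀ ∈ D)
    (IH : ∀ t ⊂ D, ∀ (η : ι → ℝ≥0) (c : Finset ι → ℝ≥0), radoHall t η c → radoFeasible t η c)
    (ℬ : Finset (Finset ι)) :
    ∀ (η : ι → ℝ≥0) (c : Finset ι → ℝ≥0), (∀ A ∈ ℬ, i₀ ∈ A) →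
      η i₀ ≤ ∑ A ∈ ℬ, c A → radoHall D η c → radoFeasible D η c := by
  induction ℬ using Finset.induction_on with
  | empty =>
    intro η c _ hle hHall
    have h0 : η i₀ = 0 := le_antisymm (by simpa using hle) zero_le
    exact radoFeasible.extend_zero h0
      (IH (D.erase i₀) (Finset.erase_ssubset hi₀) η c (hHall.mono (Finset.erase_subset _ _)))
  | @insert A₀ ℬ' hA₀ ih =>
    intro η c hmem hle hHall
    have hi₀A₀ : i₀ ∈ A₀ := hmem A₀ (Finset.mem_insert_self _ _)
    -- the collection of "dangerous" index sets
    set 𝒮 : Finset (Finset ι) :=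
      (D.erase i₀).powerset.filter (fun I => I.Nonempty ∧ (A₀ ∩ I).Nonempty) with h𝒮def
    -- a uniform way to finish each branch
    have main : ∀ t : ℝ≥0, t ≤ η i₀ → t ≤ c A₀ →
        (∀ I ⊆ D.erase i₀, I.Nonempty → (A₀ ∩ I).Nonempty → (∑ i ∈ I, η i) + t ≤ radoCapsum c I) →
        radoFeasible D (Function.update η i₀ (η i₀ - t)) (Function.update c A₀ (c A₀ - t)) →
        radoFeasible D η c := by
      intro t h1 h2 _ hfe
      exact radoFeasible.augment hi₀ hi₀A₀ h1 h2 hfe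
    by_cases h𝒮ne : 𝒮.Nonempty
    · obtain ⟨I₀, hI₀mem, hI₀min⟩ :=
        Finset.exists_min_image 𝒮 (fun I => radoCapsum c I - ∑ i ∈ I, η i) h𝒮ne
      have hI₀sub : I₀ ⊆ D.erase i₀ := by
        have := Finset.mem_filter.mp hI₀mem
        exact Finset.mem_powerset.mp this.1
      have hI₀ne : I₀.Nonempty := ((Finset.mem_filter.mp hI₀mem).2).1
      have hI₀A₀ : (A₀ ∩ I₀).Nonempty := ((Finset.mem_filter.mp hI₀mem).2).2
      set σ : ℝ≥0 := radoCapsum c I₀ - ∑ i ∈ I₀, η i with hσdef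
      have hσI₀ : (∑ i ∈ I₀, η i) + σ = radoCapsum c I₀ := by
        rw [hσdef, add_comm]
        exact tsub_add_cancel_of_le (hHall I₀ (hI₀sub.trans (Finset.erase_subset _ _)))
      -- key slack estimate, valid whenever t ≤ σ
      have hslack : ∀ t : ℝ≥0, t ≤ σ →
          ∀ I ⊆ D.erase i₀, I.Nonempty → (A₀ ∩ I).Nonempty →
            (∑ i ∈ I, η i) + t ≤ radoCapsum c I := by
        intro t ht I hIsub hIne hIA₀
        have hImem : I ∈ 𝒮 := by
          rw [h𝒮def, Finset.mem_filter, Finset.mem_powerset]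
          exact ⟨hIsub, hIne, hIA₀⟩
        have hmin := hI₀min I hImem
        have hIHall : ∑ i ∈ I, η i ≤ radoCapsum c I :=
          hHall I (hIsub.trans (Finset.erase_subset _ _))
        calc (∑ i ∈ I, η i) + t ≤ (∑ i ∈ I, η i) + (radoCapsum c I - ∑ i ∈ I, η i) :=
              add_le_add_right (ht.trans hmin) _
        _ = radoCapsum c I := by rw [add_comm]; exact tsub_add_cancel_of_le hIHall
      by_cases hfin : η i₀ ≤ c A₀ ∧ η i₀ ≤ σ
      · -- FINISH: route all of η i₀ through A₀
        refine main (η i₀) le_rfl hfin.1 (hslack _ hfin.2) ?_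
        have hzero : Function.update η i₀ (η i₀ - η i₀) i₀ = 0 := by
          rw [Function.update_self, tsub_self]
        refine radoFeasible.extend_zero hzero ?_
        refine IH (D.erase i₀) (Finset.erase_ssubset hi₀) _ _ ?_
        exact (rado_hall_update hi₀A₀ le_rfl hfin.1 (hslack _ hfin.2) hHall).mono
          (Finset.erase_subset _ _)
      · by_cases hσc : σ ≤ c A₀
        · -- TIGHT: after routing σ, the set I₀ becomes tight; split
          have hση : σ < η i₀ := by
            rcases not_and_or.mp hfin with h | h
            · exact lt_of_le_of_lt hσc (not_le.mp h)
            · exact not_le.mp h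
          refine main σ hση.le hσc (hslack _ le_rfl) ?_
          have hHall' := rado_hall_update hi₀A₀ hση.le hσc (hslack _ le_rfl) hHall
          have hi₀I₀ : i₀ ∉ I₀ := fun h => Finset.notMem_erase i₀ D (hI₀sub h)
          refine rado_split (I := I₀)
            (lt_of_le_of_lt hI₀sub (Finset.erase_ssubset hi₀)) hI₀ne ?_ hHall' IH
          -- tightness of I₀ in the updated instance
          have hηeq : ∑ i ∈ I₀, Function.update η i₀ (η i₀ - σ) i = ∑ i ∈ I₀, η i :=
            Finset.sum_congr rfl fun i hi =>
              Function.update_of_ne (by rintro rfl; exact hi₀I₀ hi) _ _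
          have hcap := radoCapsum_update_of_mem (c := c) (t := σ) hI₀A₀ hσc
          rw [hηeq]
          have := hσI₀
          rw [← hcap] at this
          exact (add_right_cancel this).symm ▸ rfl
        · -- EXHAUST: cell A₀ is used up; recurse on the remaining cells
          have hcσ : c A₀ < σ := not_le.mp hσc
          have hcη : c A₀ < η i₀ := by
            rcases not_and_or.mp hfin with h | h
            · exact not_le.mp h
            · exact hcσ.trans (not_le.mp h)
          refine main (c A₀) hcη.le le_rfl (hslack _ hcσ.le) ?_
          have hHall' := rado_hall_update hi₀A₀ hcη.le le_rfl (hslack _ hcσ.le) hHall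
          refine ih _ _ (fun A hA => hmem A (Finset.mem_insert_of_mem hA)) ?_ hHall'
          -- remaining supply estimate
          have hcsum : ∑ A ∈ ℬ', Function.update c A₀ (c A₀ - c A₀) A = ∑ A ∈ ℬ', c A :=
            Finset.sum_congr rfl fun A hA =>
              Function.update_of_ne (by rintro rfl; exact hA₀ hA) _ _
          rw [hcsum, Function.update_self]
          rw [Finset.sum_insert hA₀] at hle
          exact tsub_le_iff_left.mpr hle
    · -- no dangerous sets at all
      have hslack0 : ∀ t : ℝ≥0,
          ∀ I ⊆ D.erase i₀, I.Nonempty → (A₀ ∩ I).Nonempty →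
            (∑ i ∈ I, η i) + t ≤ radoCapsum c I := by
        intro t I hIsub hIne hIA₀
        exfalso
        apply h𝒮ne
        refine ⟨I, ?_⟩
        rw [h𝒮def, Finset.mem_filter, Finset.mem_powerset]
        exact ⟨hIsub, hIne, hIA₀⟩
      by_cases hfin2 : η i₀ ≤ c A₀
      · refine main (η i₀) le_rfl hfin2 (hslack0 _) ?_
        have hzero : Function.update η i₀ (η i₀ - η i₀) i₀ = 0 := by
          rw [Function.update_self, tsub_self]
        refine radoFeasible.extend_zero hzero ?_
        refine IH (D.erase i₀) (Finset.erase_ssubset hi₀) _ _ ?_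
        exact (rado_hall_update hi₀A₀ le_rfl hfin2 (hslack0 _) hHall).mono
          (Finset.erase_subset _ _)
      · have hcη : c A₀ < η i₀ := not_le.mp hfin2
        refine main (c A₀) hcη.le le_rfl (hslack0 _) ?_
        have hHall' := rado_hall_update hi₀A₀ hcη.le le_rfl (hslack0 _) hHall
        refine ih _ _ (fun A hA => hmem A (Finset.mem_insert_of_mem hA)) ?_ hHall'
        have hcsum : ∑ A ∈ ℬ', Function.update c A₀ (c A₀ - c A₀) A = ∑ A ∈ ℬ', c A :=
          Finset.sum_congr rfl fun A hA =>
            Function.update_of_ne (by rintro rfl; exact hA₀ hA) _ _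
        rw [hcsum, Function.update_self]
        rw [Finset.sum_insert hA₀] at hle
        exact tsub_le_iff_left.mpr hle

theorem rado_flow {ι : Type*} [Fintype ι] [DecidableEq ι] :
    ∀ (D : Finset ι) (η : ι → ℝ≥0) (c : Finset ι → ℝ≥0),
    radoHall D η c → radoFeasible D η c := by
  intro D
  induction D using Finset.strongInduction with
  | _ D IH =>
    intro η c hHall
    rcases D.eq_empty_or_nonempty with rfl | ⟨i₀, hi₀⟩
    · exact ⟨fun _ _ => 0, fun i A h => absurd rfl h, fun i hi => absurd hi (by simp),
        fun A => by simp⟩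
    · refine rado_inner D i₀ hi₀ IH (Finset.univ.filter (fun A => i₀ ∈ A)) η c
        (fun A hA => (Finset.mem_filter.mp hA).2) ?_ hHall
      have h := hHall {i₀} (by simpa using hi₀)
      rw [Finset.sum_singleton] at h
      refine h.trans (le_of_eq ?_)
      unfold radoCapsum
      apply Finset.sum_congr _ (fun _ _ => rfl)
      apply Finset.filter_congr
      intro A _
      simp [Finset.singleton_inter_of_mem, Finset.Nonempty]

end Flow

/-! ### Part 3: carving a measurable set into pieces of prescribed measures. -/

section Carve

variable {S : Type*} [MeasurableSpace S] (μ : Measure S) [IsFiniteMeasure μ]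

lemma rado_carve {ι : Type*} [DecidableEq ι]
    (sier : ∀ A : Set S, MeasurableSet A → ∀ r : ℝ≥0∞, r ≤ μ A →
      ∃ B ⊆ A, MeasurableSet B ∧ μ B = r) :
    ∀ (T : Finset ι) (C : Set S), MeasurableSet C → ∀ f : ι → ℝ≥0∞,
      (∑ i ∈ T, f i) ≤ μ C →
      ∃ Y : ι → Set S,
        (∀ i, MeasurableSet (Y i)) ∧ (∀ i, Y i ⊆ C) ∧
        (∀ i j, i ≠ j → Disjoint (Y i) (Y j)) ∧
        (∀ i ∉ T, Y i = ∅) ∧ (∀ i ∈ T, μ (Y i) = f i) := by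
  intro T
  induction T using Finset.induction_on with
  | empty =>
    intro C _ f _
    exact ⟨fun _ => ∅, fun _ => MeasurableSet.empty, fun _ => empty_subset _,
      fun _ _ _ => disjoint_bot_left, fun _ _ => rfl, fun i hi => absurd hi (by simp)⟩
  | @insert a T ha ih =>
    intro C hC f hle
    rw [Finset.sum_insert ha] at hle
    obtain ⟨B, hBC, hBm, hBμ⟩ := sier C hC (f a) (le_trans le_add_self (le_trans (le_of_eq (add_comm _ _)) hle))
    have hfa_ne : f a ≠ ⊤ := by
      rw [← hBμ]; exact measure_ne_top μ B
    have hrest : ∑ i ∈ T, f i ≤ μ (C \ B) := by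
      rw [measure_diff hBC hBm.nullMeasurableSet (measure_ne_top μ B), hBμ]
      exact ENNReal.le_sub_of_add_le_left hfa_ne hle
    obtain ⟨Y, hYm, hYsub, hYd, hYe, hYμ⟩ := ih (C \ B) (hC.diff hBm) f hrest
    refine ⟨Function.update Y a B, ?_, ?_, ?_, ?_, ?_⟩
    · intro i
      by_cases hia : i = a
      · subst hia; rw [Function.update_self]; exact hBm
      · rw [Function.update_of_ne hia]; exact hYm i
    · intro i
      by_cases hia : i = a
      · subst hia; rw [Function.update_self]; exact hBC
      · rw [Function.update_of_ne hia]; exact (hYsub i).trans diff_subset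
    · intro i j hij
      by_cases hia : i = a
      · subst hia
        rw [Function.update_self, Function.update_of_ne (Ne.symm hij)]
        exact (disjoint_sdiff_left.mono_left (hYsub j)).symm
      · rw [Function.update_of_ne hia]
        by_cases hja : j = a
        · subst hja
          rw [Function.update_self]
          exact disjoint_sdiff_left.mono_left (hYsub i)
        · rw [Function.update_of_ne hja]
          exact hYd i j hij
    · intro i hi
      rw [Finset.mem_insert] at hi
      push_neg at hi
      rw [Function.update_of_ne hi.1]
      exact hYe i hi.2
    · intro i hi
      rw [Finset.mem_insert] at hi
      rcases hi with rfl | hiT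
      · rw [Function.update_self]; exact hBμ
      · rw [Function.update_of_ne (by rintro rfl; exact ha hiT)]
        exact hYμ i hiT


end Carve

/-! ### Main theorem: Rado's measurable marriage theorem (finite version). -/

theorem stmt_9 {S : Type*} [MeasurableSpace S] (μ : Measure S) [IsFiniteMeasure μ]
    (hnonatomic : ∀ A : Set S, MeasurableSet A → 0 < μ A →
      ∃ B ⊆ A, MeasurableSet B ∧ 0 < μ B ∧ μ B < μ A)
    (n : ℕ) (Sets : Fin n → Set S) (hmeas : ∀ i, MeasurableSet (Sets i))
    (hcover : (⋃ i, Sets i) = Set.univ)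
    (ε : Fin n → ℝ) (hε : ∀ i, 0 < ε i)
    (hsum : ∑ i, ε i = (μ Set.univ).toReal) :
    (∃ P : Fin n → Set S,
        (∀ i, MeasurableSet (P i)) ∧
        Pairwise (Function.onFun Disjoint P) ∧
        (⋃ i, P i) = Set.univ ∧
        (∀ i, P i ⊆ Sets i) ∧
        (∀ i, μ (P i) = ENNReal.ofReal (ε i))) ↔
      ∀ I : Finset (Fin n),
        ∑ i ∈ I, ENNReal.ofReal (ε i) ≤ μ (⋃ i ∈ I, Sets i) := by
  constructor
  · rintro ⟨P, hPm, hPd, hPu, hPsub, hPμ⟩ I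
    have hdisj : PairwiseDisjoint (↑I : Set (Fin n)) P := fun i _ j _ hij => hPd hij
    calc ∑ i ∈ I, ENNReal.ofReal (ε i) = ∑ i ∈ I, μ (P i) :=
          Finset.sum_congr rfl (fun i _ => (hPμ i).symm)
    _ = μ (⋃ i ∈ I, P i) := (measure_biUnion_finset hdisj (fun i _ => hPm i)).symm
    _ ≤ μ (⋃ i ∈ I, Sets i) := measure_mono (Set.iUnion₂_mono fun i _ => hPsub i)
  · intro hHall
    classical
    have sier := rado_sierpinski μ hnonatomic
    -- the cells of the algebra generated by the Sets
    set cell : Finset (Fin n) → Set S := fun A => {x | ∀ i, x ∈ Sets i ↔ i ∈ A} with hcell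
    have hcellm : ∀ A, MeasurableSet (cell A) := by
      intro A
      have heq : cell A = ⋂ i, (if i ∈ A then Sets i else (Sets i)ᶜ) := by
        ext x
        simp only [hcell, mem_setOf_eq, mem_iInter]
        constructor
        · intro h i
          by_cases hiA : i ∈ A
          · rw [if_pos hiA]; exact (h i).mpr hiA
          · rw [if_neg hiA]; exact fun hx => hiA ((h i).mp hx)
        · intro h i
          constructor
          · intro hx
            by_contra hiA
            have := h i; rw [if_neg hiA] at this; exact this hx
          · intro hiA
            have := h i; rw [if_pos hiA] at this; exact this
      rw [heq]
      refine MeasurableSet.iInter fun i => ?_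
      by_cases hiA : i ∈ A
      · rw [if_pos hiA]; exact hmeas i
      · rw [if_neg hiA]; exact (hmeas i).compl
    have hcelldisj : ∀ A B, A ≠ B → Disjoint (cell A) (cell B) := by
      intro A B hAB
      rw [Set.disjoint_left]
      intro x hxA hxB
      apply hAB
      ext i
      rw [← hxA i, hxB i]
    have hcellsub : ∀ A, ∀ i ∈ A, cell A ⊆ Sets i := fun A i hi x hx => (hx i).mpr hi
    have hcellunion : ∀ I : Finset (Fin n),
        (⋃ i ∈ I, Sets i) = ⋃ A ∈ Finset.univ.filter
          (fun A : Finset (Fin n) => (A ∩ I).Nonempty), cell A := by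
      intro I
      ext x
      simp only [mem_iUnion, exists_prop]
      constructor
      · rintro ⟨i, hiI, hxi⟩
        refine ⟨Finset.univ.filter (fun j => x ∈ Sets j), ?_, ?_⟩
        · simp only [Finset.mem_filter, Finset.mem_univ, true_and]
          exact ⟨i, Finset.mem_inter.mpr ⟨Finset.mem_filter.mpr ⟨Finset.mem_univ i, hxi⟩, hiI⟩⟩
        · intro j; simp [Finset.mem_filter]
      · rintro ⟨A, hA, hxA⟩
        obtain ⟨i, hi⟩ := (Finset.mem_filter.mp hA).2
        rw [Finset.mem_inter] at hi
        exact ⟨i, hi.2, (hxA i).mpr hi.1⟩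
    have hμunion : ∀ I : Finset (Fin n), μ (⋃ i ∈ I, Sets i)
        = ∑ A ∈ Finset.univ.filter (fun A : Finset (Fin n) => (A ∩ I).Nonempty), μ (cell A) := by
      intro I
      rw [hcellunion I]
      exact measure_biUnion_finset (fun A _ B _ hAB => hcelldisj A B hAB) (fun A _ => hcellm A)
    -- set up the finite flow problem
    set η : Fin n → ℝ≥0 := fun i => (ε i).toNNReal with hη
    set c : Finset (Fin n) → ℝ≥0 := fun A => (μ (cell A)).toNNReal with hc
    have hcoeη : ∀ i, (η i : ℝ≥0∞) = ENNReal.ofReal (ε i) := fun i => rfl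
    have hcoec : ∀ A, (c A : ℝ≥0∞) = μ (cell A) := fun A =>
      ENNReal.coe_toNNReal (measure_ne_top μ _)
    have hHall' : radoHall Finset.univ η c := by
      intro I _
      rw [← ENNReal.coe_le_coe]
      have h1 : ((∑ i ∈ I, η i : ℝ≥0) : ℝ≥0∞) = ∑ i ∈ I, ENNReal.ofReal (ε i) := by
        rw [ENNReal.coe_finset_sum]
        exact Finset.sum_congr rfl fun i _ => hcoeη i
      have h2 : ((radoCapsum c I : ℝ≥0) : ℝ≥0∞) = μ (⋃ i ∈ I, Sets i) := by
        rw [radoCapsum, ENNReal.coe_finset_sum, hμunion I]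
        exact Finset.sum_congr rfl fun A _ => hcoec A
      rw [h1, h2]
      exact hHall I
    obtain ⟨x, hxsupp, hxsum, hxcap⟩ := rado_flow Finset.univ η c hHall'
    -- carve each cell according to x
    have hcarve : ∀ A : Finset (Fin n), ∃ Y : Fin n → Set S,
        (∀ i, MeasurableSet (Y i)) ∧ (∀ i, Y i ⊆ cell A) ∧
        (∀ i j, i ≠ j → Disjoint (Y i) (Y j)) ∧
        (∀ i ∉ (Finset.univ : Finset (Fin n)), Y i = ∅) ∧
        (∀ i ∈ (Finset.univ : Finset (Fin n)), μ (Y i) = (x i A : ℝ≥0∞)) := by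
      intro A
      refine rado_carve μ sier Finset.univ (cell A) (hcellm A) (fun i => (x i A : ℝ≥0∞)) ?_
      calc ∑ i, ((x i A : ℝ≥0) : ℝ≥0∞) = ((∑ i, x i A : ℝ≥0) : ℝ≥0∞) :=
            (ENNReal.ofNNReal_finsetSum _ _).symm
      _ ≤ ((c A : ℝ≥0) : ℝ≥0∞) := ENNReal.coe_le_coe.mpr (hxcap A)
      _ = μ (cell A) := hcoec A
    choose Y hYm hYsub hYd _ hYμ using hcarve
    set Z : Fin n → Finset (Fin n) → Set S :=
      fun i A => if x i A = 0 then ∅ else Y A i with hZ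
    have hZY : ∀ i A, Z i A ⊆ Y A i := by
      intro i A
      by_cases h : x i A = 0
      · rw [hZ]; simp [h]
      · rw [hZ]; simp [h]
    have hZm : ∀ i A, MeasurableSet (Z i A) := by
      intro i A
      by_cases h : x i A = 0 <;> simp [hZ, h, hYm A i]
    have hZcell : ∀ i A, Z i A ⊆ cell A := fun i A => (hZY i A).trans (hYsub A i)
    have hZsets : ∀ i A, Z i A ⊆ Sets i := by
      intro i A
      by_cases h : x i A = 0
      · rw [hZ]; simp [h]
      · rw [hZ]; simp only [h, if_neg, if_false]
        exact (hYsub A i).trans (hcellsub A i (hxsupp i A h).2)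
    have hZμ : ∀ i A, μ (Z i A) = (x i A : ℝ≥0∞) := by
      intro i A
      by_cases h : x i A = 0
      · rw [hZ]; simp [h]
      · rw [hZ]; simp only [h, if_false]
        exact hYμ A i (Finset.mem_univ i)
    -- the main pieces
    set P' : Fin n → Set S := fun i => ⋃ A ∈ (Finset.univ : Finset (Finset (Fin n))), Z i A
      with hP'
    have hP'm : ∀ i, MeasurableSet (P' i) :=
      fun i => Finset.measurableSet_biUnion _ (fun A _ => hZm i A)
    have hP'sub : ∀ i, P' i ⊆ Sets i := fun i => iUnion₂_subset fun A _ => hZsets i A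
    have hP'μ : ∀ i, μ (P' i) = ENNReal.ofReal (ε i) := by
      intro i
      rw [hP']
      have hd : PairwiseDisjoint (↑(Finset.univ : Finset (Finset (Fin n)))) (Z i) :=
        fun A _ B _ hAB => (hcelldisj A B hAB).mono (hZcell i A) (hZcell i B)
      rw [measure_biUnion_finset hd (fun A _ => hZm i A)]
      calc ∑ A, μ (Z i A) = ∑ A, ((x i A : ℝ≥0) : ℝ≥0∞) :=
            Finset.sum_congr rfl fun A _ => hZμ i A
      _ = ((∑ A, x i A : ℝ≥0) : ℝ≥0∞) := (ENNReal.ofNNReal_finsetSum _ _).symm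
      _ = ((η i : ℝ≥0) : ℝ≥0∞) := by rw [hxsum i (Finset.mem_univ i)]
      _ = ENNReal.ofReal (ε i) := hcoeη i
    have hP'd : ∀ i j, i ≠ j → Disjoint (P' i) (P' j) := by
      intro i j hij
      rw [Set.disjoint_left]
      intro a hai haj
      rw [hP'] at hai haj
      simp only [mem_iUnion, exists_prop] at hai haj
      obtain ⟨A, _, haA⟩ := hai
      obtain ⟨B, _, haB⟩ := haj
      rcases eq_or_ne A B with rfl | hAB
      · exact Set.disjoint_left.mp ((hYd A i j hij).mono (hZY i A) (hZY j A)) haA haB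
      · exact Set.disjoint_left.mp ((hcelldisj A B hAB).mono (hZcell i A) (hZcell j B)) haA haB
    -- the leftover null set
    set U : Set S := ⋃ i, P' i with hU
    have hUm : MeasurableSet U := MeasurableSet.iUnion hP'm
    have hUμ : μ U = μ Set.univ := by
      rw [hU, measure_iUnion (fun i j hij => hP'd i j hij) hP'm, tsum_fintype]
      calc ∑ i, μ (P' i) = ∑ i, ENNReal.ofReal (ε i) :=
            Finset.sum_congr rfl fun i _ => hP'μ i
      _ = ENNReal.ofReal (∑ i, ε i) := (ENNReal.ofReal_sum_of_nonneg fun i _ => (hε i).le).symm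
      _ = ENNReal.ofReal ((μ Set.univ).toReal) := by rw [hsum]
      _ = μ Set.univ := ENNReal.ofReal_toReal (measure_ne_top μ _)
    set R : Set S := Set.univ \ U with hR
    have hRm : MeasurableSet R := MeasurableSet.univ.diff hUm
    have hRμ : μ R = 0 := by
      rw [hR, measure_diff (subset_univ U) hUm.nullMeasurableSet (measure_ne_top μ U), hUμ,
        tsub_self]
    set Rp : Fin n → Set S := fun i => R ∩ (Sets i \ ⋃ j, ⋃ (_ : j < i), Sets j) with hRp
    have hRpm : ∀ i, MeasurableSet (Rp i) := by
      intro i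
      exact hRm.inter ((hmeas i).diff (MeasurableSet.iUnion fun j =>
        MeasurableSet.iUnion fun _ => hmeas j))
    have hRpμ : ∀ i, μ (Rp i) = 0 :=
      fun i => measure_mono_null (inter_subset_left) hRμ
    have hRpsub : ∀ i, Rp i ⊆ Sets i := fun i =>
      inter_subset_right.trans diff_subset
    have hRpR : ∀ i, Rp i ⊆ R := fun i => inter_subset_left
    have hRpunion : (⋃ i, Rp i) = R := by
      apply Subset.antisymm (iUnion_subset hRpR)
      intro a haR
      have hamem : a ∈ ⋃ i, Sets i := by rw [hcover]; exact mem_univ a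
      obtain ⟨i, hi⟩ := mem_iUnion.mp hamem
      set T : Finset (Fin n) := Finset.univ.filter (fun j => a ∈ Sets j) with hT
      have hTne : T.Nonempty := ⟨i, by simp [hT, hi]⟩
      set i₀ := T.min' hTne with hi₀
      refine mem_iUnion.mpr ⟨i₀, haR, ?_, ?_⟩
      · have : i₀ ∈ T := T.min'_mem hTne
        rw [hT, Finset.mem_filter] at this
        exact this.2
      · intro hmem2
        simp only [mem_iUnion] at hmem2
        obtain ⟨j, hji, haj⟩ := hmem2
        have : i₀ ≤ j := T.min'_le j (by simp [hT, haj])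
        exact absurd hji (not_lt.mpr this)
    have hRpd : ∀ i j, i ≠ j → Disjoint (Rp i) (Rp j) := by
      intro i j hij
      rcases lt_or_gt_of_ne hij with h | h
      · rw [Set.disjoint_left]
        intro a hai haj
        exact ((haj.2).2) (mem_iUnion.mpr ⟨i, mem_iUnion.mpr ⟨h, hai.2.1⟩⟩)
      · rw [Set.disjoint_left]
        intro a hai haj
        exact ((hai.2).2) (mem_iUnion.mpr ⟨j, mem_iUnion.mpr ⟨h, haj.2.1⟩⟩)
    -- assemble
    refine ⟨fun i => P' i ∪ Rp i, ?_, ?_, ?_, ?_, ?_⟩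
    · exact fun i => (hP'm i).union (hRpm i)
    · intro i j hij
      have h1 : Disjoint (P' i) (P' j) := hP'd i j hij
      have h2 : Disjoint (Rp i) (Rp j) := hRpd i j hij
      have hUR : Disjoint U R := by rw [hR]; exact Set.disjoint_sdiff_right
      have h3 : Disjoint (P' i) (Rp j) :=
        (hUR.mono_left (subset_iUnion P' i)).mono_right (hRpR j)
      have h4 : Disjoint (Rp i) (P' j) :=
        ((hUR.mono_left (subset_iUnion P' j)).mono_right (hRpR i)).symm
      exact Disjoint.union_left (Disjoint.union_right h1 h3) (Disjoint.union_right h4 h2)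
    · rw [iUnion_union_distrib, hRpunion, ← hU, hR, union_diff_self, union_univ]
    · exact fun i => union_subset (hP'sub i) (hRpsub i)
    · intro i
      have hPeq : μ (P' i ∪ Rp i) = μ (P' i) := by
        apply le_antisymm
        · exact le_trans (measure_union_le _ _) (by rw [hRpμ i, add_zero])
        · exact measure_mono subset_union_left
      rw [hPeq, hP'μ i]
end

section
/- Let w = (w_{ijk}), 1 ≤ i,j,k ≤ n, be a nonnegative real three-index matrix such that for some l > 0 and all pairs of indices: ∑ᵢ w_{ijk} = ∑ⱼ w_{ijk} = ∑ₖ w_{ijk} = l. Then there exists a finite quasigroup (Q,∘) and a partition σ = {Q₁,…,Qₙ} of Q such that for all i,j,k: if there exist q ∈ Qᵢ, q' ∈ Qⱼ with q∘q' ∈ Qₖ, then w_{ijk} > 0. -/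
open Finset

lemma sep_lemma {κ : Type} [Fintype κ] (W : Submodule ℚ (κ → ℚ)) (b : κ → ℚ)
    (hb : b ∉ W) : ∃ c : κ → ℚ, (∀ u ∈ W, ∑ k, c k * u k = 0) ∧ ∑ k, c k * b k ≠ 0 := by
  classical
  have hπb : W.mkQ b ≠ 0 := by
    simpa [Submodule.Quotient.mk_eq_zero] using hb
  obtain ⟨ψ, hψ⟩ : ∃ ψ : Module.Dual ℚ ((κ → ℚ) ⧸ W), ψ (W.mkQ b) ≠ 0 := by
    by_contra h
    push_neg at h
    exact hπb ((Module.forall_dual_apply_eq_zero_iff ℚ _).1 h)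
  set φ : (κ → ℚ) →ₗ[ℚ] ℚ := ψ.comp W.mkQ with hφ
  have key : ∀ u : κ → ℚ, φ u = ∑ k, u k * φ (fun j => if k = j then 1 else 0) := by
    intro u
    simpa [smul_eq_mul] using LinearMap.pi_apply_eq_sum_univ φ u
  refine ⟨fun k => φ (fun j => if k = j then 1 else 0), fun u hu => ?_, ?_⟩
  · rw [← Finset.sum_congr rfl (fun k _ => mul_comm _ _), ← key u]
    have : W.mkQ u = 0 := by simpa [Submodule.Quotient.mk_eq_zero] using hu
    simp [hφ, this]
  · rw [← Finset.sum_congr rfl (fun k _ => mul_comm _ _), ← key b]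
    exact hψ

lemma fact_q {κ ι : Type} [Fintype κ] [Fintype ι] (v : ι → κ → ℚ) (b : κ → ℚ)
    (hb : (fun k => (b k : ℝ)) ∈ Submodule.span ℝ (Set.range fun i => fun k => (v i k : ℝ))) :
    b ∈ Submodule.span ℚ (Set.range v) := by
  classical
  by_contra h
  obtain ⟨c, hc0, hcb⟩ := sep_lemma (Submodule.span ℚ (Set.range v)) b h
  rw [Submodule.mem_span_range_iff_exists_fun] at hb
  obtain ⟨r, hr⟩ := hb
  have hr' : ∀ k, (∑ i, r i * (v i k : ℝ)) = (b k : ℝ) := by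
    intro k
    have := congrFun hr k
    simpa [Finset.sum_apply] using this
  have hz : ∑ k, (c k : ℝ) * (b k : ℝ) = 0 := by
    have : ∀ i : ι, (∑ k, (c k : ℝ) * (v i k : ℝ)) = 0 := by
      intro i
      have h0 : ∑ k, c k * v i k = 0 :=
        hc0 _ (Submodule.subset_span (Set.mem_range_self i))
      have := congrArg (fun q : ℚ => (q : ℝ)) h0
      push_cast at this
      simpa using this
    calc ∑ k, (c k : ℝ) * (b k : ℝ)
        = ∑ k, (c k : ℝ) * (∑ i, r i * (v i k : ℝ)) := by
          refine Finset.sum_congr rfl fun k _ => by rw [hr' k]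
      _ = ∑ i, r i * (∑ k, (c k : ℝ) * (v i k : ℝ)) := by
          simp_rw [Finset.mul_sum]
          rw [Finset.sum_comm]
          exact Finset.sum_congr rfl fun i _ => Finset.sum_congr rfl fun k _ => by ring
      _ = 0 := by simp [this]
  apply hcb
  have : ((∑ k, c k * b k : ℚ) : ℝ) = 0 := by push_cast; exact hz
  exact_mod_cast this

lemma exists_ker_vector {ι : Type} [Fintype ι] {N : ℕ} (A : ι → Fin (N + 1) → ℚ)
    (hsp : (Pi.single (Fin.last N) (1 : ℚ) : Fin (N + 1) → ℚ) ∉ Submodule.span ℚ (Set.range A)) :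
    ∃ z : EuclideanSpace ℝ (Fin (N + 1)),
      (∀ i, ∑ k, (A i k : ℝ) * z k = 0) ∧ z (Fin.last N) ≠ 0 := by
  classical
  have hRn : ¬ ((fun k => ((Pi.single (Fin.last N) (1 : ℚ) : Fin (N + 1) → ℚ) k : ℝ)) ∈
      Submodule.span ℝ (Set.range fun i => fun k => (A i k : ℝ))) := by
    intro h
    exact hsp (fact_q A _ h)
  set sing : EuclideanSpace ℝ (Fin (N + 1)) :=
    WithLp.toLp 2 (fun k => ((Pi.single (Fin.last N) (1 : ℚ) : Fin (N + 1) → ℚ) k : ℝ)) with hsing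
  set W : Submodule ℝ (EuclideanSpace ℝ (Fin (N + 1))) :=
    Submodule.span ℝ (Set.range fun i => (WithLp.toLp 2 (fun k => (A i k : ℝ)) : EuclideanSpace ℝ (Fin (N + 1))))
    with hW
  haveI : FiniteDimensional ℝ W := FiniteDimensional.span_of_finite ℝ (Set.finite_range _)
  have hsW : sing ∉ W := by
    intro h
    apply hRn
    have := Submodule.mem_map_of_mem (f := ((WithLp.linearEquiv 2 ℝ (Fin (N + 1) → ℝ)) :
      EuclideanSpace ℝ (Fin (N + 1)) →ₗ[ℝ] (Fin (N + 1) → ℝ))) h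
    rw [Submodule.map_span, ← Set.range_comp] at this
    exact this
  have hsWoo : sing ∉ Wᗮᗮ := by rwa [Submodule.orthogonal_orthogonal]
  rw [Submodule.mem_orthogonal] at hsWoo
  push_neg at hsWoo
  obtain ⟨z, hzW, hzl⟩ := hsWoo
  have hinner : (inner ℝ z sing : ℝ) = z (Fin.last N) := by
    rw [PiLp.inner_apply]
    rw [Finset.sum_eq_single (Fin.last N)]
    · simp [hsing]
    · intro k _ hk; simp [hsing, Pi.single_apply, hk]
    · simp
  refine ⟨z, fun i => ?_, by rw [← hinner]; exact hzl⟩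
  have hmem : (WithLp.toLp 2 (fun k => (A i k : ℝ)) : EuclideanSpace ℝ (Fin (N + 1))) ∈ W :=
    Submodule.subset_span (Set.mem_range_self i)
  have := (Submodule.mem_orthogonal W z).1 hzW _ hmem
  rw [PiLp.inner_apply] at this
  simpa [mul_comm] using this

lemma rat_approx (N : ℕ) : ∀ {ι : Type} [Fintype ι] (A : ι → Fin N → ℚ) (b : ι → ℚ)
    (x : Fin N → ℝ), (∀ i, ∑ k, (A i k : ℝ) * x k = (b i : ℝ)) → ∀ ε : ℝ, 0 < ε →
    ∃ y : Fin N → ℚ, (∀ i, ∑ k, A i k * y k = b i) ∧ ∀ k, |(y k : ℝ) - x k| < ε := by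
  induction N with
  | zero =>
    intro ι _ A b x hx ε hε
    refine ⟨fun _ => 0, fun i => ?_, fun k => k.elim0⟩
    have : (0 : ℝ) = (b i : ℝ) := by simpa using hx i
    have : (b i : ℝ) = ((0 : ℚ) : ℝ) := by simpa using this.symm
    simpa using (Rat.cast_injective this).symm
  | succ N IH =>
    intro ι _ A b x hx ε hε
    classical
    -- helper to finish once we know a real solution whose last coordinate is the rational q
    have finish : ∀ (q : ℚ) (xt : Fin (N + 1) → ℝ), (∀ i, ∑ k, (A i k : ℝ) * xt k = (b i : ℝ)) →
        xt (Fin.last N) = (q : ℝ) → ∀ ε' : ℝ, 0 < ε' →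
        ∃ y : Fin (N + 1) → ℚ, (∀ i, ∑ k, A i k * y k = b i) ∧
          (∀ k : Fin N, |(y (Fin.castSucc k) : ℝ) - xt (Fin.castSucc k)| < ε') ∧
          y (Fin.last N) = q := by
      intro q xt hxt hlast ε' hε'
      set A' : ι → Fin N → ℚ := fun i k => A i (Fin.castSucc k) with hA'
      set b' : ι → ℚ := fun i => b i - q * A i (Fin.last N) with hb'
      have hx' : ∀ i, ∑ k, (A' i k : ℝ) * xt (Fin.castSucc k) = (b' i : ℝ) := by
        intro i
        have := hxt i
        rw [Fin.sum_univ_castSucc] at this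
        rw [hlast] at this
        simp only [hA', hb']
        push_cast
        linarith
      obtain ⟨y', hy', herr⟩ := IH A' b' (fun k => xt (Fin.castSucc k)) hx' ε' hε'
      refine ⟨Fin.snoc y' q, fun i => ?_, fun k => ?_, by simp⟩
      · rw [Fin.sum_univ_castSucc]
        simp only [Fin.snoc_castSucc, Fin.snoc_last]
        have := hy' i
        simp only [hA', hb'] at this
        linarith
      · simpa using herr k
    by_cases hsp : (Pi.single (Fin.last N) (1 : ℚ) : Fin (N + 1) → ℚ) ∈
        Submodule.span ℚ (Set.range A)
    · -- last coordinate is forced, and its value is rational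
      rw [Submodule.mem_span_range_iff_exists_fun] at hsp
      obtain ⟨c, hc⟩ := hsp
      set q : ℚ := ∑ i, c i * b i with hq
      have hxq : x (Fin.last N) = (q : ℝ) := by
        have h1 : ∀ k, (∑ i, (c i : ℝ) * (A i k : ℝ)) =
            ((Pi.single (Fin.last N) (1 : ℚ) : Fin (N + 1) → ℚ) k : ℝ) := by
          intro k
          have := congrFun hc k
          have := congrArg (fun t : ℚ => (t : ℝ)) this
          push_cast at this
          simpa [Finset.sum_apply] using this
        have hq' : (q : ℝ) = ∑ i, (c i : ℝ) * (b i : ℝ) := by rw [hq]; push_cast; rfl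
        have key : ∑ i, (c i : ℝ) * (b i : ℝ) = x (Fin.last N) := by
          calc ∑ i, (c i : ℝ) * (b i : ℝ)
              = ∑ i, (c i : ℝ) * (∑ k, (A i k : ℝ) * x k) :=
                Finset.sum_congr rfl fun i _ => by rw [hx i]
            _ = ∑ k, (∑ i, (c i : ℝ) * (A i k : ℝ)) * x k := by
                simp_rw [Finset.mul_sum, Finset.sum_mul]
                rw [Finset.sum_comm]
                exact Finset.sum_congr rfl fun i _ => Finset.sum_congr rfl fun k _ => by ring
            _ = ∑ k, ((Pi.single (Fin.last N) (1 : ℚ) : Fin (N + 1) → ℚ) k : ℝ) * x k :=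
                Finset.sum_congr rfl fun k _ => by rw [h1 k]
            _ = x (Fin.last N) := by
                rw [Finset.sum_eq_single (Fin.last N)]
                · simp
                · intro k _ hk; simp [Pi.single_apply, hk]
                · simp
        rw [hq']
        exact key.symm
      obtain ⟨y, hy, herr, hylast⟩ := finish q x hx hxq ε hε
      refine ⟨y, hy, fun k => ?_⟩
      refine Fin.lastCases ?_ ?_ k
      · rw [hylast, ← hxq]
        simpa using hε
      · intro k'
        exact herr k'
    · -- last coordinate is free: find a real kernel vector with nonzero last coordinate
      obtain ⟨z, hzker, hzlast⟩ := exists_ker_vector A hsp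
      -- choose a rational value for the last coordinate
      set M : ℝ := ∑ k, |z k| / |z (Fin.last N)| with hM
      have hM0 : 0 ≤ M := Finset.sum_nonneg fun k _ => by positivity
      set δ : ℝ := (ε / 2) / (M + 1) with hδ
      have hδ0 : 0 < δ := div_pos (by linarith) (by linarith)
      obtain ⟨q, hq1, hq2⟩ := exists_rat_btwn (show x (Fin.last N) - δ < x (Fin.last N) by linarith)
      have hqd : |(q : ℝ) - x (Fin.last N)| < δ := by
        rw [abs_lt]; constructor <;> linarith
      set coef : ℝ := ((q : ℝ) - x (Fin.last N)) / z (Fin.last N) with hcoef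
      set xt : Fin (N + 1) → ℝ := fun k => x k + coef * z k with hxt
      have hxtsol : ∀ i, ∑ k, (A i k : ℝ) * xt k = (b i : ℝ) := by
        intro i
        simp only [hxt, mul_add, Finset.sum_add_distrib]
        rw [hx i]
        have : ∑ k, (A i k : ℝ) * (coef * z k) = coef * ∑ k, (A i k : ℝ) * z k := by
          rw [Finset.mul_sum]
          exact Finset.sum_congr rfl fun k _ => by ring
        rw [this, hzker i, mul_zero, add_zero]
      have hxtlast : xt (Fin.last N) = (q : ℝ) := by
        simp only [hxt, hcoef]
        field_simp
        ring
      have hxtclose : ∀ k, |xt k - x k| ≤ ε / 2 := by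
        intro k
        have h1 : |xt k - x k| = |(q : ℝ) - x (Fin.last N)| * (|z k| / |z (Fin.last N)|) := by
          simp only [hxt, hcoef]
          rw [add_sub_cancel_left, abs_mul, abs_div]
          ring
        have h2 : |z k| / |z (Fin.last N)| ≤ M := by
          rw [hM]
          exact Finset.single_le_sum (f := fun k => |z k| / |z (Fin.last N)|)
            (fun k _ => by positivity) (Finset.mem_univ k)
        have h3 : |(q : ℝ) - x (Fin.last N)| * (|z k| / |z (Fin.last N)|) ≤ δ * (M + 1) :=
          mul_le_mul hqd.le (by linarith [h2]) (by positivity) hδ0.le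
        have h4 : δ * (M + 1) = ε / 2 := by
          rw [hδ, div_mul_cancel₀ _ (by linarith : M + 1 ≠ 0)]
        rw [h1]
        linarith
      obtain ⟨y, hy, herr, hylast⟩ := finish q xt hxtsol hxtlast (ε / 2) (by linarith)
      refine ⟨y, hy, fun k => ?_⟩
      refine Fin.lastCases ?_ ?_ k
      · rw [hylast]
        have : |(q : ℝ) - x (Fin.last N)| < δ := hqd
        have hδε : δ ≤ ε / 2 := by
          rw [hδ]
          rw [div_le_iff₀ (by linarith)]
          nlinarith
        linarith
      · intro k'
        have t1 := herr k'
        have t2 := hxtclose (Fin.castSucc k')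
        calc |(y (Fin.castSucc k') : ℝ) - x (Fin.castSucc k')|
            ≤ |(y (Fin.castSucc k') : ℝ) - xt (Fin.castSucc k')| +
              |xt (Fin.castSucc k') - x (Fin.castSucc k')| := abs_sub_le _ _ _
          _ < ε := by linarith

lemma rat_approx' {κ ι : Type} [Fintype κ] [Fintype ι] (A : ι → κ → ℚ) (b : ι → ℚ) (x : κ → ℝ)
    (hx : ∀ i, ∑ k, (A i k : ℝ) * x k = (b i : ℝ)) {ε : ℝ} (hε : 0 < ε) :
    ∃ y : κ → ℚ, (∀ i, ∑ k, A i k * y k = b i) ∧ ∀ k, |(y k : ℝ) - x k| < ε := by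
  classical
  set e := Fintype.equivFin κ with he
  obtain ⟨y', hy', herr⟩ := rat_approx (Fintype.card κ) (fun i t => A i (e.symm t)) b
    (fun t => x (e.symm t)) (fun i => by
      rw [← hx i]
      exact Fintype.sum_equiv e.symm _ _ fun t => rfl) ε hε
  refine ⟨fun k => y' (e k), fun i => ?_, fun k => by simpa using herr (e k)⟩
  rw [← hy' i]
  exact Fintype.sum_equiv e _ _ fun k => by simp

section collapse
variable {R : Type} [CommSemiring R] {n : ℕ}

lemma collapse1 (j k : Fin n) (f : Fin n × Fin n × Fin n → R) :
    ∑ e : Fin n × Fin n × Fin n,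
      ((if e.2.1 = j then (1 : R) else 0) * (if e.2.2 = k then (1 : R) else 0)) * f e
      = ∑ i, f (i, j, k) := by
  rw [Fintype.sum_prod_type]
  refine Finset.sum_congr rfl fun i _ => ?_
  rw [Fintype.sum_prod_type]
  simp [ite_mul, one_mul, zero_mul, Finset.sum_ite_eq']

lemma collapse2 (i k : Fin n) (f : Fin n × Fin n × Fin n → R) :
    ∑ e : Fin n × Fin n × Fin n,
      ((if e.1 = i then (1 : R) else 0) * (if e.2.2 = k then (1 : R) else 0)) * f e
      = ∑ j, f (i, j, k) := by
  rw [Fintype.sum_prod_type, Finset.sum_comm, Fintype.sum_prod_type]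
  refine Finset.sum_congr rfl fun b _ => ?_
  simp [ite_mul, one_mul, zero_mul, Finset.sum_ite_eq', Finset.sum_ite_irrel]

lemma collapse3 (i j : Fin n) (f : Fin n × Fin n × Fin n → R) :
    ∑ e : Fin n × Fin n × Fin n,
      ((if e.1 = i then (1 : R) else 0) * (if e.2.1 = j then (1 : R) else 0)) * f e
      = ∑ k, f (i, j, k) := by
  rw [Fintype.sum_prod_type, Finset.sum_comm, Fintype.sum_prod_type]
  rw [Finset.sum_comm]
  refine Finset.sum_congr rfl fun c _ => ?_
  simp [ite_mul, one_mul, zero_mul, Finset.sum_ite_eq', Finset.sum_ite_irrel]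

lemma collapse4 (e0 : Fin n × Fin n × Fin n) (P : Prop) [Decidable P]
    (f : Fin n × Fin n × Fin n → R) :
    ∑ e : Fin n × Fin n × Fin n, (if e = e0 ∧ P then (1 : R) else 0) * f e
      = if P then f e0 else 0 := by
  by_cases hP : P
  · simp [hP, ite_mul, one_mul, zero_mul, Finset.sum_ite_eq']
  · simp [hP]

end collapse

lemma exists_nat_tensor (n : ℕ) (w : Fin n → Fin n → Fin n → ℝ)
    (hnonneg : ∀ i j k, 0 ≤ w i j k) (l : ℝ) (hl : 0 < l)
    (h1 : ∀ j k, ∑ i, w i j k = l)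
    (h2 : ∀ i k, ∑ j, w i j k = l)
    (h3 : ∀ i j, ∑ k, w i j k = l) :
    ∃ (L : ℕ) (a : Fin n → Fin n → Fin n → ℕ), 0 < L ∧
      (∀ i j k, 0 < a i j k → 0 < w i j k) ∧
      (∀ j k, ∑ i, a i j k = L) ∧ (∀ i k, ∑ j, a i j k = L) ∧ (∀ i j, ∑ k, a i j k = L) := by
  classical
  set κ := Fin n × Fin n × Fin n with hκ
  set ι := (Fin n × Fin n) ⊕ ((Fin n × Fin n) ⊕ ((Fin n × Fin n) ⊕ κ)) with hι
  set A : ι → κ → ℚ := fun i => match i with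
    | Sum.inl (j, k) => fun e =>
        (if e.2.1 = j then (1 : ℚ) else 0) * (if e.2.2 = k then (1 : ℚ) else 0)
    | Sum.inr (Sum.inl (i', k)) => fun e =>
        (if e.1 = i' then (1 : ℚ) else 0) * (if e.2.2 = k then (1 : ℚ) else 0)
    | Sum.inr (Sum.inr (Sum.inl (i', j))) => fun e =>
        (if e.1 = i' then (1 : ℚ) else 0) * (if e.2.1 = j then (1 : ℚ) else 0)
    | Sum.inr (Sum.inr (Sum.inr e0)) => fun e =>
        if e = e0 ∧ ¬ 0 < w e0.1 e0.2.1 e0.2.2 then (1 : ℚ) else 0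
    with hA
  set b : ι → ℚ := fun i => match i with
    | Sum.inl _ => 1
    | Sum.inr (Sum.inl _) => 1
    | Sum.inr (Sum.inr (Sum.inl _)) => 1
    | Sum.inr (Sum.inr (Sum.inr _)) => 0
    with hb
  set x : κ → ℝ := fun e => w e.1 e.2.1 e.2.2 / l with hx
  have hA1 : ∀ j k : Fin n, A (Sum.inl (j, k)) = fun e : κ =>
      (if e.2.1 = j then (1 : ℚ) else 0) * (if e.2.2 = k then (1 : ℚ) else 0) := by
    intro j k; rw [hA]
  have hA2 : ∀ i' k : Fin n, A (Sum.inr (Sum.inl (i', k))) = fun e : κ =>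
      (if e.1 = i' then (1 : ℚ) else 0) * (if e.2.2 = k then (1 : ℚ) else 0) := by
    intro i' k; rw [hA]
  have hA3 : ∀ i' j : Fin n, A (Sum.inr (Sum.inr (Sum.inl (i', j)))) = fun e : κ =>
      (if e.1 = i' then (1 : ℚ) else 0) * (if e.2.1 = j then (1 : ℚ) else 0) := by
    intro i' j; rw [hA]
  have hA4 : ∀ e0 : κ, A (Sum.inr (Sum.inr (Sum.inr e0))) = fun e : κ =>
      if e = e0 ∧ ¬ 0 < w e0.1 e0.2.1 e0.2.2 then (1 : ℚ) else 0 := by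
    intro e0; rw [hA]
  have hsol : ∀ i, ∑ k, (A i k : ℝ) * x k = (b i : ℝ) := by
    rintro (⟨j, k⟩ | ⟨i', k⟩ | ⟨i', j⟩ | e0)
    · rw [hA1 j k]
      have : ∀ e : κ, (((if e.2.1 = j then (1 : ℚ) else 0) * (if e.2.2 = k then (1 : ℚ) else 0) : ℚ) : ℝ)
          = (if e.2.1 = j then (1 : ℝ) else 0) * (if e.2.2 = k then (1 : ℝ) else 0) := by
        intro e; split_ifs <;> norm_num
      simp_rw [this]
      rw [collapse1 j k x]
      simp only [hx]
      rw [← Finset.sum_div, h1, div_self hl.ne', hb]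
      norm_num
    · rw [hA2 i' k]
      have : ∀ e : κ, (((if e.1 = i' then (1 : ℚ) else 0) * (if e.2.2 = k then (1 : ℚ) else 0) : ℚ) : ℝ)
          = (if e.1 = i' then (1 : ℝ) else 0) * (if e.2.2 = k then (1 : ℝ) else 0) := by
        intro e; split_ifs <;> norm_num
      simp_rw [this]
      rw [collapse2 i' k x]
      simp only [hx]
      rw [← Finset.sum_div, h2, div_self hl.ne', hb]
      norm_num
    · rw [hA3 i' j]
      have : ∀ e : κ, (((if e.1 = i' then (1 : ℚ) else 0) * (if e.2.1 = j then (1 : ℚ) else 0) : ℚ) : ℝ)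
          = (if e.1 = i' then (1 : ℝ) else 0) * (if e.2.1 = j then (1 : ℝ) else 0) := by
        intro e; split_ifs <;> norm_num
      simp_rw [this]
      rw [collapse3 i' j x]
      simp only [hx]
      rw [← Finset.sum_div, h3, div_self hl.ne', hb]
      norm_num
    · rw [hA4 e0]
      have : ∀ e : κ, (((if e = e0 ∧ ¬ 0 < w e0.1 e0.2.1 e0.2.2 then (1 : ℚ) else 0) : ℚ) : ℝ)
          = (if e = e0 ∧ ¬ 0 < w e0.1 e0.2.1 e0.2.2 then (1 : ℝ) else 0) := by
        intro e; split_ifs <;> norm_num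
      simp_rw [this]
      rw [collapse4 e0 _ x]
      have hcase : w e0.1 e0.2.1 e0.2.2 = 0 ∨ 0 < w e0.1 e0.2.1 e0.2.2 :=
        (hnonneg _ _ _).eq_or_lt.imp Eq.symm id
      rcases hcase with h | h
      · simp [hx, h, hb]
      · simp [h, hb]
  -- choose ε
  set S : Finset κ := Finset.univ.filter (fun e => 0 < w e.1 e.2.1 e.2.2) with hS
  set ε : ℝ := if hSn : S.Nonempty then S.inf' hSn x else 1 with hε
  have hε0 : 0 < ε := by
    rw [hε]
    split
    · rename_i hSn
      rw [Finset.lt_inf'_iff]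
      intro e he
      rw [hS, Finset.mem_filter] at he
      exact div_pos he.2 hl
    · norm_num
  have hεle : ∀ e ∈ S, ε ≤ x e := by
    intro e he
    rw [hε]
    rw [dif_pos ⟨e, he⟩]
    exact Finset.inf'_le x he
  obtain ⟨y, hy, herr⟩ := rat_approx' A b x hsol hε0
  -- facts about y
  have hy0 : ∀ e : κ, ¬ 0 < w e.1 e.2.1 e.2.2 → y e = 0 := by
    intro e hne
    have := hy (Sum.inr (Sum.inr (Sum.inr e)))
    rw [hA4 e, collapse4 e _ y, if_pos hne] at this
    simpa [hb] using this
  have hypos : ∀ e : κ, 0 < w e.1 e.2.1 e.2.2 → 0 < y e := by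
    intro e hpos
    have heS : e ∈ S := by rw [hS, Finset.mem_filter]; exact ⟨Finset.mem_univ e, hpos⟩
    have h1' := herr e
    have h2' := hεle e heS
    rw [abs_lt] at h1'
    have : (0 : ℝ) < (y e : ℚ) := by linarith
    exact_mod_cast this
  have hynn : ∀ e : κ, 0 ≤ y e := by
    intro e
    by_cases hpos : 0 < w e.1 e.2.1 e.2.2
    · exact (hypos e hpos).le
    · rw [hy0 e hpos]
  -- line sums of y are 1
  have hline1 : ∀ j k, ∑ i, y (i, j, k) = 1 := by
    intro j k
    have := hy (Sum.inl (j, k))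
    rwa [hA1 j k, collapse1 j k y, hb] at this
  have hline2 : ∀ i k, ∑ j, y (i, j, k) = 1 := by
    intro i k
    have := hy (Sum.inr (Sum.inl (i, k)))
    rwa [hA2 i k, collapse2 i k y, hb] at this
  have hline3 : ∀ i j, ∑ k, y (i, j, k) = 1 := by
    intro i j
    have := hy (Sum.inr (Sum.inr (Sum.inl (i, j))))
    rwa [hA3 i j, collapse3 i j y, hb] at this
  -- clear denominators
  set D : ℕ := ∏ e : κ, (y e).den with hD
  have hDpos : 0 < D := Finset.prod_pos fun e _ => (y e).pos
  set a : Fin n → Fin n → Fin n → ℕ :=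
    fun i j k => (y (i, j, k)).num.toNat * (D / (y (i, j, k)).den) with ha
  have key : ∀ e : κ, ((a e.1 e.2.1 e.2.2 : ℕ) : ℚ) = y e * D := by
    intro e
    have hdvd : (y e).den ∣ D := Finset.dvd_prod_of_mem _ (Finset.mem_univ e)
    have hden : ((y e).den : ℚ) ≠ 0 := by exact_mod_cast (y e).pos.ne'
    have hnum : (((y e).num.toNat : ℕ) : ℚ) = ((y e).num : ℚ) := by
      rw [← Int.cast_natCast]
      congr 1
      exact Int.toNat_of_nonneg (Rat.num_nonneg.2 (hynn e))
    have hdiv : (((D / (y e).den : ℕ)) : ℚ) = (D : ℚ) / ((y e).den : ℚ) :=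
      Nat.cast_div hdvd hden
    have hyd : y e * ((y e).den : ℚ) = ((y e).num : ℚ) :=
      ((div_eq_iff hden).1 (Rat.num_div_den (y e))).symm
    have ha' : a e.1 e.2.1 e.2.2 = (y e).num.toNat * (D / (y e).den) := by rw [ha]
    calc ((a e.1 e.2.1 e.2.2 : ℕ) : ℚ)
        = (((y e).num.toNat : ℕ) : ℚ) * (((D / (y e).den : ℕ)) : ℚ) := by
          rw [ha']; push_cast; ring
      _ = ((y e).num : ℚ) * ((D : ℚ) / ((y e).den : ℚ)) := by rw [hnum, hdiv]
      _ = y e * D := by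
          rw [← hyd, mul_assoc, mul_comm ((y e).den : ℚ), div_mul_cancel₀ _ hden]
  refine ⟨D, a, hDpos, ?_, ?_, ?_, ?_⟩
  · intro i j k hpos
    by_contra hw
    have hy00 := hy0 (i, j, k) hw
    have : a i j k = 0 := by
      rw [ha]
      simp [Rat.num_eq_zero.2 hy00]
    omega
  · intro j k
    have : ((∑ i, a i j k : ℕ) : ℚ) = ((D : ℕ) : ℚ) := by
      calc ((∑ i, a i j k : ℕ) : ℚ) = ∑ i, ((a i j k : ℕ) : ℚ) := by push_cast; rfl
        _ = ∑ i, y (i, j, k) * D := Finset.sum_congr rfl fun i _ => key (i, j, k)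
        _ = ((D : ℕ) : ℚ) := by rw [← Finset.sum_mul, hline1, one_mul]
    exact_mod_cast this
  · intro i k
    have : ((∑ j, a i j k : ℕ) : ℚ) = ((D : ℕ) : ℚ) := by
      calc ((∑ j, a i j k : ℕ) : ℚ) = ∑ j, ((a i j k : ℕ) : ℚ) := by push_cast; rfl
        _ = ∑ j, y (i, j, k) * D := Finset.sum_congr rfl fun j _ => key (i, j, k)
        _ = ((D : ℕ) : ℚ) := by rw [← Finset.sum_mul, hline2, one_mul]
    exact_mod_cast this
  · intro i j
    have : ((∑ k, a i j k : ℕ) : ℚ) = ((D : ℕ) : ℚ) := by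
      calc ((∑ k, a i j k : ℕ) : ℚ) = ∑ k, ((a i j k : ℕ) : ℚ) := by push_cast; rfl
        _ = ∑ k, y (i, j, k) * D := Finset.sum_congr rfl fun k _ => key (i, j, k)
        _ = ((D : ℕ) : ℚ) := by rw [← Finset.sum_mul, hline3, one_mul]
    exact_mod_cast this

lemma birkhoff_nat (L : ℕ) : ∀ {n : ℕ} (A : Fin n → Fin n → ℕ),
    (∀ i, ∑ j, A i j = L) → (∀ j, ∑ i, A i j = L) →
    ∃ π : Fin L → Equiv.Perm (Fin n), ∀ i j,
      A i j = (Finset.univ.filter fun t => π t i = j).card := by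
  induction L with
  | zero =>
    intro n A hrow _
    refine ⟨Fin.elim0, fun i j => ?_⟩
    have : A i j = 0 := by
      have := hrow i
      have := Finset.sum_eq_zero_iff.1 this j (Finset.mem_univ j)
      exact this
    rw [this]
    simp
  | succ L IH =>
    intro n A hrow hcol
    classical
    -- find a permutation inside the support via Hall's theorem
    set f : Fin n → Finset (Fin n) := fun i => Finset.univ.filter (fun j => A i j ≠ 0) with hf
    have hall : ∀ s : Finset (Fin n), s.card ≤ (s.biUnion f).card := by
      intro s
      have hrow' : ∀ i, ∑ j ∈ f i, A i j = L + 1 := by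
        intro i
        rw [hf]
        rw [Finset.sum_filter_ne_zero]
        exact hrow i
      have key1 : s.card * (L + 1) = ∑ i ∈ s, ∑ j ∈ f i, A i j := by
        rw [Finset.sum_congr rfl fun i _ => hrow' i]
        simp [mul_comm]
      have key2 : ∑ i ∈ s, ∑ j ∈ f i, A i j ≤ (s.biUnion f).card * (L + 1) := by
        calc ∑ i ∈ s, ∑ j ∈ f i, A i j
            ≤ ∑ i ∈ s, ∑ j ∈ s.biUnion f, A i j := by
              refine Finset.sum_le_sum fun i hi => ?_
              exact Finset.sum_le_sum_of_subset (Finset.subset_biUnion_of_mem f hi)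
          _ ≤ ∑ i, ∑ j ∈ s.biUnion f, A i j := by
              exact Finset.sum_le_sum_of_subset (Finset.subset_univ s)
          _ = ∑ j ∈ s.biUnion f, ∑ i, A i j := Finset.sum_comm
          _ = (s.biUnion f).card * (L + 1) := by
              rw [Finset.sum_congr rfl fun j _ => hcol j]
              simp [mul_comm]
      have := key1.le.trans key2
      exact Nat.le_of_mul_le_mul_right this (Nat.succ_pos L)
    obtain ⟨g, hginj, hgmem⟩ :=
      (Finset.all_card_le_biUnion_card_iff_exists_injective f).1 hall
    have hgbij : Function.Bijective g := (Finite.injective_iff_bijective).1 hginj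
    set σ : Equiv.Perm (Fin n) := Equiv.ofBijective g hgbij with hσ
    have hσpos : ∀ i, 0 < A i (σ i) := by
      intro i
      have := hgmem i
      rw [hf, Finset.mem_filter] at this
      exact Nat.pos_of_ne_zero this.2
    set A' : Fin n → Fin n → ℕ := fun i j => A i j - (if σ i = j then 1 else 0) with hA'
    have hdecomp : ∀ i j, A i j = A' i j + (if σ i = j then 1 else 0) := by
      intro i j
      rw [hA']
      by_cases h : σ i = j
      · subst h
        have := hσpos i
        simp only [if_true]
        omega
      · simp [h]
    have hrow' : ∀ i, ∑ j, A' i j = L := by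
      intro i
      have : ∑ j, A i j = (∑ j, A' i j) + ∑ j, (if σ i = j then 1 else 0) := by
        rw [← Finset.sum_add_distrib]
        exact Finset.sum_congr rfl fun j _ => hdecomp i j
      rw [hrow i] at this
      rw [Finset.sum_ite_eq] at this
      simp at this
      omega
    have hcol' : ∀ j, ∑ i, A' i j = L := by
      intro j
      have : ∑ i, A i j = (∑ i, A' i j) + ∑ i, (if σ i = j then 1 else 0) := by
        rw [← Finset.sum_add_distrib]
        exact Finset.sum_congr rfl fun i _ => hdecomp i j
      rw [hcol j] at this
      have hs : ∑ i, (if σ i = j then 1 else 0) = 1 := by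
        have : ∀ i : Fin n, (if σ i = j then (1:ℕ) else 0) = (if i = σ.symm j then 1 else 0) := by
          intro i
          congr 1
          simp [Equiv.apply_eq_iff_eq_symm_apply]
        rw [Finset.sum_congr rfl fun i _ => this i, Finset.sum_ite_eq']
        simp
      rw [hs] at this
      omega
    obtain ⟨π', hπ'⟩ := IH A' hrow' hcol'
    refine ⟨Fin.cons σ π', fun i j => ?_⟩
    rw [Finset.card_filter]
    rw [Fin.sum_univ_succ]
    simp only [Fin.cons_zero, Fin.cons_succ]
    rw [hdecomp i j, hπ' i j, Finset.card_filter]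
    omega

theorem stmt_11 (n : ℕ) (w : Fin n → Fin n → Fin n → ℝ)
    (hnonneg : ∀ i j k, 0 ≤ w i j k) (l : ℝ) (hl : 0 < l)
    (h1 : ∀ j k, ∑ i, w i j k = l)
    (h2 : ∀ i k, ∑ j, w i j k = l)
    (h3 : ∀ i j, ∑ k, w i j k = l) :
    ∃ (m : ℕ) (op : Fin m → Fin m → Fin m) (σ : Fin m → Fin n),
      (∀ a, Function.Bijective (op a)) ∧
      (∀ a, Function.Bijective (fun x => op x a)) ∧
      Function.Surjective σ ∧
      (∀ q q', 0 < w (σ q) (σ q') (σ (op q q'))) := by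
  classical
  obtain ⟨L, a, hL, hsupp, ha1, ha2, ha3⟩ := exists_nat_tensor n w hnonneg l hl h1 h2 h3
  haveI : NeZero L := ⟨hL.ne'⟩
  -- permutation decompositions of each slice
  have hπ : ∀ k : Fin n, ∃ π : Fin L → Equiv.Perm (Fin n), ∀ i j,
      a i j k = (Finset.univ.filter fun t => π t i = j).card := by
    intro k
    exact birkhoff_nat L (fun i j => a i j k) (fun i => ha2 i k) (fun j => ha1 j k)
  choose π0 hπ0 using hπ
  set zeq : ZMod L ≃ Fin L := Fintype.equivFinOfCardEq (ZMod.card L) with hzeq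
  set π : Fin n → ZMod L → Equiv.Perm (Fin n) := fun k t => π0 k (zeq t) with hπdef
  -- bijections between Fin (a i j k) and matching indices
  have hβcard : ∀ i j k : Fin n,
      Fintype.card (Fin (a i j k)) = Fintype.card {t : ZMod L // π k t i = j} := by
    intro i j k
    have e1 : Fintype.card {t : ZMod L // π k t i = j} =
        Fintype.card {u : Fin L // π0 k u i = j} :=
      Fintype.card_congr (zeq.subtypeEquiv fun t => Iff.rfl)
    rw [Fintype.card_fin, e1, Fintype.card_subtype, hπ0 k i j]
  set β : ∀ i j k : Fin n, Fin (a i j k) ≃ {t : ZMod L // π k t i = j} :=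
    fun i j k => Fintype.equivOfCardEq (hβcard i j k) with hβ
  -- the sigma equivs from line sums in the k-direction
  have hEcard : ∀ i j : Fin n, Fintype.card (ZMod L) =
      Fintype.card (Σ k : Fin n, Fin (a i j k)) := by
    intro i j
    rw [ZMod.card, Fintype.card_sigma]
    simp only [Fintype.card_fin]
    exact (ha3 i j).symm
  set E : ∀ i j : Fin n, ZMod L ≃ Σ k : Fin n, Fin (a i j k) :=
    fun i j => Fintype.equivOfCardEq (hEcard i j) with hE
  set mid : ∀ i : Fin n, (Fin n × ZMod L) ≃ (Σ j : Fin n, Σ k : Fin n, {t : ZMod L // π k t i = j}) :=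
    fun i => (Equiv.sigmaEquivProd (Fin n) (ZMod L)).symm.trans
      (Equiv.sigmaCongrRight fun j => (E i j).trans (Equiv.sigmaCongrRight fun k => β i j k))
    with hmid
  set c₁ : ∀ i : Fin n, (Σ j : Fin n, Σ k : Fin n, {t : ZMod L // π k t i = j}) ≃ (Σ _k : Fin n, ZMod L) :=
    fun i => {
      toFun := fun x => ⟨x.2.1, x.2.2.1⟩
      invFun := fun y => ⟨π y.1 y.2 i, y.1, y.2, rfl⟩
      left_inv := by rintro ⟨j, k, t, rfl⟩; rfl
      right_inv := by rintro ⟨k, t⟩; rfl }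
    with hc₁
  set c₂ : ∀ j : Fin n, (Σ i : Fin n, Σ k : Fin n, {t : ZMod L // π k t i = j}) ≃ (Σ _k : Fin n, ZMod L) :=
    fun j => {
      toFun := fun x => ⟨x.2.1, x.2.2.1⟩
      invFun := fun y => ⟨(π y.1 y.2).symm j, y.1, y.2, Equiv.apply_symm_apply _ j⟩
      left_inv := by
        rintro ⟨i, k, t, h⟩
        obtain rfl : (π k t).symm j = i := by rw [← h]; exact Equiv.symm_apply_apply _ i
        rfl
      right_inv := by rintro ⟨k, t⟩; rfl }
    with hc₂
  set opT : (Fin n × ZMod L) → (Fin n × ZMod L) → (Fin n × ZMod L) :=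
    fun q q' => (Equiv.sigmaEquivProd (Fin n) (ZMod L))
      ((c₁ q.1) ((mid q.1) (q'.1, q'.2 - q.2)))
    with hopT
  -- row bijectivity
  have hrowbij : ∀ q, Function.Bijective (opT q) := by
    intro q
    have : opT q = ⇑((((Equiv.prodCongr (Equiv.refl (Fin n)) (Equiv.subRight q.2)).trans
        (mid q.1)).trans (c₁ q.1)).trans (Equiv.sigmaEquivProd (Fin n) (ZMod L))) :=
      funext fun q' => rfl
    rw [this]
    exact Equiv.bijective _
  -- column bijectivity
  have hcolbij : ∀ q', Function.Bijective (fun q => opT q q') := by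
    intro q'
    have : (fun q => opT q q') = ⇑(((((Equiv.prodCongr (Equiv.refl (Fin n))
        (Equiv.subLeft q'.2)).trans
        ((Equiv.sigmaEquivProd (Fin n) (ZMod L)).symm)).trans
        (Equiv.sigmaCongrRight fun i => (E i q'.1).trans
          (Equiv.sigmaCongrRight fun k => β i q'.1 k))).trans (c₂ q'.1)).trans
        (Equiv.sigmaEquivProd (Fin n) (ZMod L))) :=
      funext fun q => rfl
    rw [this]
    exact Equiv.bijective _
  -- positivity
  have hposT : ∀ q q' : Fin n × ZMod L,
      0 < w q.1 q'.1 ((opT q q').1) := by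
    intro q q'
    have hk : (opT q q').1 = ((E q.1 q'.1) (q'.2 - q.2)).1 := rfl
    rw [hk]
    exact hsupp _ _ _ (Fin.pos ((E q.1 q'.1) (q'.2 - q.2)).2)
  -- transport to Fin (n * L)
  have hcardT : Fintype.card (Fin n × ZMod L) = n * L := by
    rw [Fintype.card_prod, Fintype.card_fin, ZMod.card]
  set eT : (Fin n × ZMod L) ≃ Fin (n * L) := Fintype.equivFinOfCardEq hcardT with heT
  refine ⟨n * L, fun x y => eT (opT (eT.symm x) (eT.symm y)), fun x => (eT.symm x).1,
    ?_, ?_, ?_, ?_⟩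
  · intro x
    exact eT.bijective.comp ((hrowbij _).comp eT.symm.bijective)
  · intro y
    exact eT.bijective.comp ((hcolbij _).comp eT.symm.bijective)
  · intro k
    exact ⟨eT (k, 0), by simp⟩
  · intro q q'
    have := hposT (eT.symm q) (eT.symm q')
    simpa using this
end

section
/- Every finite partial quasigroup can be completed to a finite quasigroup: if (Q,∘) is a finite set with a partial binary operation such that each equation a∘x=b and x∘a=b has at most one solution, then there exists a finite quasigroup (Q',∘') with Q ⊆ Q' and ∘' extending ∘. -/
set_option linter.unusedSectionVars false

open Finset

section RowExt

variable {α : Type*} [Fintype α] [DecidableEq α]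

/-- Available symbols for an empty column `j`, given previous rows `ρ` and partial row `p`. -/
def pqAvail {k : ℕ} (ρ : Fin k → Equiv.Perm α) (p : α → Option α) (j : α) : Finset α :=
  ((univ : Finset α) \ univ.filter (fun s => ∃ j', p j' = some s)) \
    univ.image (fun i => ρ i j)

theorem pq_row_ext {k : ℕ} (ρ : Fin k → Equiv.Perm α) (p : α → Option α)
    (hp : ∀ j j' c, p j = some c → p j' = some c → j = j')
    (hpd : ∀ i j c, p j = some c → c ≠ ρ i j)
    (hall : ∀ S : Finset α, (∀ j ∈ S, p j = none) →
      S.card ≤ (S.biUnion (pqAvail ρ p)).card) :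
    ∃ π : Equiv.Perm α, (∀ j c, p j = some c → π j = c) ∧ ∀ i j, π j ≠ ρ i j := by
  classical
  have key : ∀ s : Finset {j : α // p j = none},
      s.card ≤ (s.biUnion (fun j => pqAvail ρ p j.1)).card := by
    intro s
    have h1 : s.card = (s.image Subtype.val).card :=
      (card_image_of_injective s Subtype.val_injective).symm
    have h2 : s.biUnion (fun j => pqAvail ρ p j.1)
        = (s.image Subtype.val).biUnion (pqAvail ρ p) := by
      ext x; simp
    rw [h1, h2]
    refine hall _ ?_
    intro j hj
    obtain ⟨⟨j', hj'⟩, _, rfl⟩ := mem_image.mp hj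
    exact hj'
  obtain ⟨f, hfinj, hf⟩ :=
    (Finset.all_card_le_biUnion_card_iff_existsInjective'
      (fun j : {j : α // p j = none} => pqAvail ρ p j.1)).mp key
  -- f-values are not in the range of p and avoid the columns
  have hfR : ∀ x : {j : α // p j = none}, ¬ ∃ j', p j' = some (f x) := by
    intro x hx
    have hm := hf x
    rw [pqAvail, mem_sdiff] at hm
    rw [mem_sdiff] at hm
    exact hm.1.2 (mem_filter.mpr ⟨mem_univ _, hx⟩)
  have hfC : ∀ (x : {j : α // p j = none}) (i : Fin k), f x ≠ ρ i x.1 := by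
    intro x i h
    have hm := hf x
    rw [pqAvail, mem_sdiff] at hm
    exact hm.2 (mem_image.mpr ⟨i, mem_univ i, h.symm⟩)
  set g : α → α := fun j => if h : p j = none then f ⟨j, h⟩
    else (p j).get (Option.ne_none_iff_isSome.mp h) with hg
  have hgsome : ∀ j c, p j = some c → g j = c := by
    intro j c h
    have hne : ¬ p j = none := by simp [h]
    simp only [hg, dif_neg hne]
    simp [h]
  have hgnone : ∀ j (h : p j = none), g j = f ⟨j, h⟩ := by
    intro j h; simp only [hg, dif_pos h]
  have hginj : Function.Injective g := by
    intro j j' hjj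
    by_cases h1 : p j = none <;> by_cases h2 : p j' = none
    · rw [hgnone j h1, hgnone j' h2] at hjj
      exact congrArg Subtype.val (hfinj hjj)
    · obtain ⟨c, hc⟩ := Option.ne_none_iff_exists'.mp h2
      rw [hgnone j h1, hgsome j' c hc] at hjj
      exact absurd ⟨j', hjj ▸ hc⟩ (hfR ⟨j, h1⟩)
    · obtain ⟨c, hc⟩ := Option.ne_none_iff_exists'.mp h1
      rw [hgsome j c hc, hgnone j' h2] at hjj
      exact absurd ⟨j, hjj ▸ hc⟩ (hfR ⟨j', h2⟩)
    · obtain ⟨c, hc⟩ := Option.ne_none_iff_exists'.mp h1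
      obtain ⟨c', hc'⟩ := Option.ne_none_iff_exists'.mp h2
      rw [hgsome j c hc, hgsome j' c' hc'] at hjj
      exact hp j j' c' (hjj ▸ hc) hc'
  refine ⟨Equiv.ofBijective g (Finite.injective_iff_bijective.mp hginj), ?_, ?_⟩
  · intro j c h
    exact hgsome j c h
  · intro i j
    show g j ≠ ρ i j
    by_cases h : p j = none
    · rw [hgnone j h]; exact hfC ⟨j, h⟩ i
    · obtain ⟨c, hc⟩ := Option.ne_none_iff_exists'.mp h
      rw [hgsome j c hc]; exact hpd i j c hc

end RowExt

section B
variable {α : Type*} [Fintype α] [DecidableEq α]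

theorem pq_hallB {k : ℕ} (hk : k < Fintype.card α)
    (ρ : Fin k → Equiv.Perm α)
    (hρ : ∀ i i', i ≠ i' → ∀ j, ρ i j ≠ ρ i' j)
    (S : Finset α) :
    S.card ≤ (S.biUnion (pqAvail ρ (fun _ => none))).card := by
  classical
  set N := Fintype.card α
  set A : α → Finset α := pqAvail ρ (fun _ => none) with hA
  have hAeq : ∀ j, A j = (univ : Finset α) \ univ.image (fun i => ρ i j) := by
    intro j
    simp [hA, pqAvail]
  have hcolinj : ∀ j, Function.Injective (fun i => ρ i j) := by
    intro j i i' h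
    by_contra hne
    exact hρ i i' hne j h
  have hAcard : ∀ j, (A j).card = N - k := by
    intro j
    rw [hAeq j, card_sdiff_of_subset (subset_univ _), card_univ,
      card_image_of_injective _ (hcolinj j), card_univ, Fintype.card_fin]
  set B : α → Finset α := fun s => (univ : Finset α) \ univ.image (fun i => (ρ i).symm s)
    with hB
  have hBcard : ∀ s, (B s).card = N - k := by
    intro s
    have hinj : Function.Injective (fun i => (ρ i).symm s) := by
      intro i i' h
      by_contra hne
      apply hρ i i' hne ((ρ i).symm s)
      simp only at h
      have h1 : ρ i ((ρ i).symm s) = s := Equiv.apply_symm_apply _ _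
      have h2 : ρ i' ((ρ i).symm s) = s := by
        rw [h, Equiv.apply_symm_apply]
      rw [h1, h2]
    rw [hB, card_sdiff_of_subset (subset_univ _), card_univ,
      card_image_of_injective _ hinj, card_univ, Fintype.card_fin]
  set U := S.biUnion A with hU
  have hsig : (S.sigma A).card ≤ (U.sigma B).card := by
    apply card_le_card_of_injOn (fun x => ⟨x.2, x.1⟩)
    · rintro ⟨j, s⟩ hx
      rw [mem_coe, mem_sigma] at hx
      obtain ⟨hjS, hsA⟩ := hx
      dsimp only at hjS hsA ⊢
      rw [mem_coe, mem_sigma]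
      constructor
      · exact mem_biUnion.mpr ⟨j, hjS, hsA⟩
      · rw [hAeq j, mem_sdiff] at hsA
        rw [hB, mem_sdiff]
        refine ⟨mem_univ _, ?_⟩
        intro hmem
        dsimp only at hmem
        obtain ⟨i, _, hi⟩ := mem_image.mp hmem
        apply hsA.2
        refine mem_image.mpr ⟨i, mem_univ i, ?_⟩
        rw [← hi, Equiv.apply_symm_apply]
    · rintro ⟨j, s⟩ _ ⟨j', s'⟩ _ h
      simp only [Sigma.mk.inj_iff] at h ⊢
      exact ⟨eq_of_heq h.2, heq_of_eq h.1⟩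
  rw [card_sigma, card_sigma] at hsig
  have h1 : ∑ j ∈ S, (A j).card = S.card * (N - k) := by
    rw [Finset.sum_congr rfl (fun j _ => hAcard j), sum_const, smul_eq_mul]
  have h2 : ∑ s ∈ U, (B s).card = U.card * (N - k) := by
    rw [Finset.sum_congr rfl (fun s _ => hBcard s), sum_const, smul_eq_mul]
  rw [h1, h2] at hsig
  have hpos : 0 < N - k := by omega
  exact Nat.le_of_mul_le_mul_right hsig hpos

theorem pq_extend : ∀ (d k : ℕ), k + d = Fintype.card α →
    ∀ (ρ : Fin k → Equiv.Perm α),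
    (∀ i i', i ≠ i' → ∀ j, ρ i j ≠ ρ i' j) →
    ∃ ρ' : Fin (Fintype.card α) → Equiv.Perm α,
      (∀ i i', i ≠ i' → ∀ j, ρ' i j ≠ ρ' i' j) ∧
      ∀ (i : Fin k) (h : i.1 < Fintype.card α), ρ' ⟨i.1, h⟩ = ρ i := by
  intro d
  induction d with
  | zero =>
    intro k hk ρ hρ
    refine ⟨fun i => ρ ⟨i.1, by omega⟩, ?_, ?_⟩
    · intro i i' hne j
      apply hρ
      simp only [ne_eq, Fin.mk.injEq]
      exact fun h => hne (Fin.ext h)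
    · intro i h
      congr
  | succ d ih =>
    intro k hk ρ hρ
    have hkN : k < Fintype.card α := by omega
    obtain ⟨π, -, hπd⟩ := pq_row_ext ρ (fun _ => none)
      (by intro j j' c h; exact absurd h (by simp))
      (by intro i j c h; exact absurd h (by simp))
      (fun S _ => pq_hallB hkN ρ hρ S)
    set ρ₂ : Fin (k + 1) → Equiv.Perm α :=
      fun i => if h : i.1 < k then ρ ⟨i.1, h⟩ else π with hρ₂
    have hρ₂d : ∀ i i', i ≠ i' → ∀ j, ρ₂ i j ≠ ρ₂ i' j := by
      intro i i' hne j
      simp only [hρ₂]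
      by_cases h1 : i.1 < k <;> by_cases h2 : i'.1 < k <;>
        simp only [dif_pos, dif_neg, h1, h2]
      · apply hρ
        simp only [ne_eq, Fin.mk.injEq]
        exact fun h => hne (Fin.ext h)
      · exact fun h => hπd ⟨i.1, h1⟩ j h.symm
      · exact hπd ⟨i'.1, h2⟩ j
      · exact absurd (Fin.ext (by omega : i.1 = i'.1)) hne
    obtain ⟨ρ', hρ'd, hρ'e⟩ := ih (k + 1) (by omega) ρ₂ hρ₂d
    refine ⟨ρ', hρ'd, ?_⟩
    intro i h
    have := hρ'e ⟨i.1, by omega⟩ h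
    rw [this]
    simp only [hρ₂, dif_pos i.2]
end B

section Corner

variable {Q : Type*} [Fintype Q] [DecidableEq Q]

def pqF (op : Q → Q → Option Q) (a b : Q) : Q ⊕ Q × Q :=
  (op a b).elim (Sum.inr (a, b)) Sum.inl

theorem pqF_rowinj (op : Q → Q → Option Q)
    (hleft : ∀ a b x y, op a x = some b → op a y = some b → x = y) :
    ∀ a b b', pqF op a b = pqF op a b' → b = b' := by
  intro a b b' h
  unfold pqF at h
  cases h1 : op a b with
  | some c =>
    cases h2 : op a b' with
    | some c' =>
      rw [h1, h2] at h
      simp only [Option.elim, Sum.inl.injEq] at h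
      exact hleft a c b b' h1 (h ▸ h2)
    | none => rw [h1, h2] at h; simp [Option.elim] at h
  | none =>
    cases h2 : op a b' with
    | some c' => rw [h1, h2] at h; simp [Option.elim] at h
    | none =>
      rw [h1, h2] at h
      simp only [Option.elim, Sum.inr.injEq, Prod.mk.injEq] at h
      exact h.2

theorem pqF_colinj (op : Q → Q → Option Q)
    (hright : ∀ a b x y, op x a = some b → op y a = some b → x = y) :
    ∀ a a' b, pqF op a b = pqF op a' b → a = a' := by
  intro a a' b h
  unfold pqF at h
  cases h1 : op a b with
  | some c =>
    cases h2 : op a' b with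
    | some c' =>
      rw [h1, h2] at h
      simp only [Option.elim, Sum.inl.injEq] at h
      exact hright b c a a' h1 (h ▸ h2)
    | none => rw [h1, h2] at h; simp [Option.elim] at h
  | none =>
    cases h2 : op a' b with
    | some c' => rw [h1, h2] at h; simp [Option.elim] at h
    | none =>
      rw [h1, h2] at h
      simp only [Option.elim, Sum.inr.injEq, Prod.mk.injEq] at h
      exact h.1

theorem pq_corner (op : Q → Q → Option Q)
    (hleft : ∀ a b x y, op a x = some b → op a y = some b → x = y)
    (hright : ∀ a b x y, op x a = some b → op y a = some b → x = y)
    {n : ℕ} (e : Fin n ≃ Q) (hQ : Fintype.card Q = n) :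
    ∀ k, k ≤ n → ∃ ρ : Fin k → Equiv.Perm (Q ⊕ Q × Q),
      (∀ i i', i ≠ i' → ∀ j, ρ i j ≠ ρ i' j) ∧
      ∀ (i : Fin k) (hi : i.1 < n) (b : Q), ρ i (Sum.inl b) = pqF op (e ⟨i.1, hi⟩) b := by
  classical
  intro k
  induction k with
  | zero => exact fun _ => ⟨Fin.elim0, fun i => i.elim0, fun i => i.elim0⟩
  | succ k ih =>
    intro hkn
    obtain ⟨ρ, hρd, hρc⟩ := ih (by omega)
    have hkn' : k < n := hkn
    set ak : Q := e ⟨k, hkn'⟩ with hak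
    set p : (Q ⊕ Q × Q) → Option (Q ⊕ Q × Q) := fun j =>
      match j with
      | Sum.inl b => some (pqF op ak b)
      | Sum.inr _ => none
      with hp0
    have hpval : ∀ b : Q, p (Sum.inl b) = some (pqF op ak b) := fun b => rfl
    have hpnone : ∀ x : Q × Q, p (Sum.inr x) = none := fun x => rfl
    -- injectivity of the partial row
    have hp : ∀ j j' c, p j = some c → p j' = some c → j = j' := by
      rintro (b | x) (b' | x') c h h'
      · simp only [hpval, Option.some.injEq] at h h'
        rw [pqF_rowinj op hleft ak b b' (h.trans h'.symm)]
      · exact absurd h' (by simp [hpnone])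
      · exact absurd h (by simp [hpnone])
      · exact absurd h (by simp [hpnone])
    -- discordance with previous rows
    have hpd : ∀ (i : Fin k) j c, p j = some c → c ≠ ρ i j := by
      rintro i (b | x) c h heq
      · simp only [hpval, Option.some.injEq] at h
        have hi : i.1 < n := by omega
        rw [hρc i hi b] at heq
        subst h
        have := pqF_colinj op hright ak (e ⟨i.1, hi⟩) b heq
        have : (⟨k, hkn'⟩ : Fin n) = ⟨i.1, hi⟩ := e.injective this
        have : k = i.1 := congrArg Fin.val this
        omega
      · exact absurd h (by simp [hpnone])
    -- Hall condition
    have hall : ∀ S : Finset (Q ⊕ Q × Q), (∀ j ∈ S, p j = none) →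
        S.card ≤ (S.biUnion (pqAvail ρ p)).card := by
      intro S hS
      set N := Fintype.card (Q ⊕ Q × Q) with hNdef
      have hN : N = n + n * n := by
        simp [hNdef, Fintype.card_sum, Fintype.card_prod, hQ]
      set R : Finset (Q ⊕ Q × Q) := univ.filter (fun s => ∃ j', p j' = some s) with hR
      have hReq : R = univ.image (pqF op ak) := by
        ext s
        simp only [hR, mem_filter, mem_univ, true_and, mem_image]
        constructor
        · rintro ⟨(b | x), h⟩
          · exact ⟨b, by simpa [hpval, eq_comm] using h⟩
          · exact absurd h (by simp [hpnone])
        · rintro ⟨b, h⟩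
          exact ⟨Sum.inl b, by simp [hpval, h]⟩
      have hRcard : R.card = n := by
        rw [hReq, card_image_of_injective _ (pqF_rowinj op hleft ak), card_univ, hQ]
      have hRuniv : (univ \ R).card = N - n := by
        rw [card_sdiff_of_subset (subset_univ _), card_univ, hRcard]
      have hSsub : S ⊆ univ.image Sum.inr := by
        intro j hj
        cases j with
        | inl b => exact absurd (hS _ hj) (by simp [hpval])
        | inr x => exact mem_image.mpr ⟨x, mem_univ x, rfl⟩
      have hScard : S.card ≤ n * n := by
        refine le_trans (card_le_card hSsub) ?_
        rw [card_image_of_injective _ Sum.inr_injective, card_univ,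
          Fintype.card_prod, hQ]
      set U := S.biUnion (pqAvail ρ p) with hU
      by_cases hSk : S.card ≤ k
      · rcases S.eq_empty_or_nonempty with rfl | ⟨j₀, hj₀⟩
        · simp
        · have hsub : pqAvail ρ p j₀ ⊆ U := subset_biUnion_of_mem _ hj₀
          have himg : (univ.image (fun i : Fin k => ρ i j₀)).card ≤ k := by
            refine le_trans card_image_le ?_
            simp
          have hlow : (N - n) - k ≤ (pqAvail ρ p j₀).card := by
            unfold pqAvail
            rw [← hR]
            calc (N - n) - k ≤ (univ \ R).card - (univ.image (fun i : Fin k => ρ i j₀)).card := by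
                  omega
              _ ≤ _ := le_card_sdiff _ _
          have harith : k + k ≤ n * n := by nlinarith
          have := card_le_card hsub
          omega
      · push_neg at hSk
        have hsub2 : univ \ R ⊆ U := by
          intro s hs
          rw [mem_sdiff] at hs
          set bad := S.filter (fun j => ∃ i : Fin k, ρ i j = s) with hbaddef
          have hbadsub : bad ⊆ univ.image (fun i : Fin k => (ρ i).symm s) := by
            intro j hj
            rw [hbaddef, mem_filter] at hj
            obtain ⟨-, i, hi⟩ := hj
            exact mem_image.mpr ⟨i, mem_univ i, by rw [← hi, Equiv.symm_apply_apply]⟩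
          have hbadcard : bad.card ≤ k := by
            refine le_trans (card_le_card hbadsub) (le_trans card_image_le ?_)
            simp
          have hbadS : bad ⊆ S := filter_subset _ _
          have hnonempty : (S \ bad).Nonempty := by
            rw [← card_pos, card_sdiff_of_subset hbadS]
            omega
          obtain ⟨j, hj⟩ := hnonempty
          rw [mem_sdiff] at hj
          refine mem_biUnion.mpr ⟨j, hj.1, ?_⟩
          unfold pqAvail
          rw [← hR, mem_sdiff, mem_sdiff]
          refine ⟨⟨mem_univ _, hs.2⟩, ?_⟩
          intro hmem
          obtain ⟨i, -, hi⟩ := mem_image.mp hmem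
          exact hj.2 (mem_filter.mpr ⟨hj.1, i, hi⟩)
        have := card_le_card hsub2
        omega
    obtain ⟨π, hπp, hπd⟩ := pq_row_ext ρ p hp (fun i j c h => hpd i j c h) hall
    set ρ' : Fin (k + 1) → Equiv.Perm (Q ⊕ Q × Q) :=
      fun i => if h : i.1 < k then ρ ⟨i.1, h⟩ else π with hρ'
    refine ⟨ρ', ?_, ?_⟩
    · intro i i' hne j
      simp only [hρ']
      by_cases h1 : i.1 < k <;> by_cases h2 : i'.1 < k <;>
        simp only [dif_pos, dif_neg, h1, h2]
      · apply hρd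
        simp only [ne_eq, Fin.mk.injEq]
        exact fun h => hne (Fin.ext h)
      · exact fun h => hπd ⟨i.1, h1⟩ j h.symm
      · exact hπd ⟨i'.1, h2⟩ j
      · exact absurd (Fin.ext (by omega : i.1 = i'.1)) hne
    · intro i hi b
      simp only [hρ']
      by_cases h1 : i.1 < k
      · rw [dif_pos h1]
        exact hρc ⟨i.1, h1⟩ hi b
      · rw [dif_neg h1]
        have hik : i.1 = k := by omega
        have := hπp (Sum.inl b) (pqF op ak b) (hpval b)
        rw [this, hak]
        congr 2
        exact Fin.ext hik.symm
end Corner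

theorem stmt_12 {Q : Type*} [Fintype Q] [DecidableEq Q]
    (op : Q → Q → Option Q)
    (hleft : ∀ a b x y, op a x = some b → op a y = some b → x = y)
    (hright : ∀ a b x y, op x a = some b → op y a = some b → x = y) :
    ∃ (m : ℕ) (ι : Q → Fin m) (op' : Fin m → Fin m → Fin m),
      Function.Injective ι ∧
      (∀ a, Function.Bijective (op' a)) ∧
      (∀ a, Function.Bijective (fun x => op' x a)) ∧
      (∀ a b c, op a b = some c → op' (ι a) (ι b) = ι c) := by
  classical
  set n := Fintype.card Q with hn
  set e : Fin n ≃ Q := (Fintype.equivFin Q).symm with he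
  have hQ : Fintype.card Q = n := rfl
  obtain ⟨ρ₁, hρ₁d, hρ₁c⟩ := pq_corner op hleft hright e hQ n le_rfl
  have hT : Fintype.card (Q ⊕ Q × Q) = n + n * n := by
    simp [Fintype.card_sum, Fintype.card_prod, hQ]
  obtain ⟨ρ₂, hρ₂d, hρ₂e⟩ :=
    pq_extend (Fintype.card (Q ⊕ Q × Q) - n) n (by omega) ρ₁ hρ₁d
  set τ : (Q ⊕ Q × Q) ≃ Fin (n + n * n) :=
    (Equiv.sumCongr e.symm ((Equiv.prodCongr e.symm e.symm).trans finProdFinEquiv)).trans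
      finSumFinEquiv with hτ
  set σ : Fin (n + n * n) → Equiv.Perm (Q ⊕ Q × Q) :=
    fun x => ρ₂ (Fin.cast hT.symm x) with hσ
  have hσd : ∀ x x', x ≠ x' → ∀ j, σ x j ≠ σ x' j := by
    intro x x' hne j
    apply hρ₂d
    simp only [ne_eq, Fin.ext_iff, Fin.coe_cast]
    exact fun h => hne (Fin.ext h)
  have hτval : ∀ a : Q, (τ (Sum.inl a)).1 = (e.symm a).1 := by
    intro a
    simp [hτ, Equiv.sumCongr_apply, finSumFinEquiv]
  have hkey : ∀ a : Q, σ (τ (Sum.inl a)) = ρ₁ (e.symm a) := by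
    intro a
    have hlt : (e.symm a).1 < Fintype.card (Q ⊕ Q × Q) := by
      have := (e.symm a).2; omega
    have h1 : Fin.cast hT.symm (τ (Sum.inl a)) = ⟨(e.symm a).1, hlt⟩ := by
      apply Fin.ext
      simp [hτval a]
    rw [hσ]
    simp only
    rw [h1, hρ₂e (e.symm a) hlt]
  refine ⟨n + n * n, fun a => τ (Sum.inl a), fun x y => τ (σ x (τ.symm y)), ?_, ?_, ?_, ?_⟩
  · intro a a' h
    exact Sum.inl_injective (τ.injective h)
  · intro x
    exact (τ.symm.trans ((σ x).trans τ)).bijective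
  · intro y
    rw [Finite.injective_iff_bijective.symm]
    intro x x' h
    by_contra hne
    exact hσd x x' hne (τ.symm y) (τ.injective h)
  · intro a b c h
    show τ (σ (τ (Sum.inl a)) (τ.symm (τ (Sum.inl b)))) = τ (Sum.inl c)
    have h1 : τ.symm (τ (Sum.inl b)) = Sum.inl b := Equiv.symm_apply_apply _ _
    rw [h1, hkey a]
    have hlt : (e.symm a).1 < n := (e.symm a).2
    rw [hρ₁c (e.symm a) hlt b]
    have h2 : e ⟨(e.symm a).1, hlt⟩ = a := by
      rw [Fin.eta]
      exact e.apply_symm_apply a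
    rw [h2]
    have h3 : pqF op a b = Sum.inl c := by
      unfold pqF
      rw [h]
      rfl
    rw [h3]
end

section
/- Let G be a locally compact group with Haar measure ν, U a relatively compact open symmetric neighborhood of the identity, and n ∈ ℕ. Then there exists a regular compact set K (i.e., K equals the closure of its interior) with Uⁿ ⊆ K ⊆ U^{n+1} and ν(∂K) = 0. -/
/-! Since `U` is an open neighbourhood of `1`, the compact set `closure (Uⁿ)` lies in the open set
`Uⁿ⁺¹`, so Urysohn's lemma gives a compactly supported continuous `f : G → [0, 1]` equal to `1` on
`Uⁿ` and to `0` off `Uⁿ⁺¹`. The level sets `{f = t}`, `t ∈ (0, 1)`, are disjoint subsets of the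
compact set `tsupport f`, which has finite Haar measure, so all but countably many are null. For
such a `t`, the closure of the open superlevel set `{t < f}` is regular closed and its frontier
lies in `{f = t}`. -/

open MeasureTheory Set Pointwise

theorem IsOpen.closure_interior_closure {X : Type*} [TopologicalSpace X] {s : Set X}
    (hs : IsOpen s) : closure (interior (closure s)) = closure s := by
  simpa only [hs.interior_eq] using closure_interior_idem (s := s)

theorem IsCompact.pow {M : Type*} [Monoid M] [TopologicalSpace M] [ContinuousMul M] {K : Set M}
    (hK : IsCompact K) (n : ℕ) : IsCompact (K ^ n) := by
  induction n with
  | zero => simp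
  | succ k ih => rw [pow_succ]; exact ih.mul hK

section Group

variable {G : Type*} [Group G] [TopologicalSpace G] [IsTopologicalGroup G] {U : Set G}

theorem closure_pow_subset_pow_succ (hU : IsOpen U) (hU1 : (1 : G) ∈ U) (n : ℕ) :
    closure (U ^ n) ⊆ U ^ (n + 1) := by
  rw [pow_succ, ← hU.closure_mul]
  exact subset_mul_left _ hU1

theorem isCompact_closure_pow (hU : IsOpen U) (hU1 : (1 : G) ∈ U) (hUc : IsCompact (closure U))
    (n : ℕ) : IsCompact (closure (U ^ n)) :=
  (hUc.pow (n + 1)).of_isClosed_subset isClosed_closure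
    ((closure_pow_subset_pow_succ hU hU1 n).trans (pow_subset_pow_left subset_closure))

end Group

theorem HasCompactSupport.exists_mem_Ioo_measure_setOf_eq_eq_zero {X : Type*} [TopologicalSpace X]
    [MeasurableSpace X] [OpensMeasurableSpace X] (μ : Measure X) [IsFiniteMeasureOnCompacts μ]
    {f : X → ℝ} (hf : Continuous f) (hfc : HasCompactSupport f) {a b : ℝ} (ha : 0 ≤ a)
    (hab : a < b) : ∃ t ∈ Ioo a b, μ {x | f x = t} = 0 := by
  have : IsFiniteMeasure (μ.restrict (tsupport f)) :=
    isFiniteMeasure_restrict.2 hfc.isCompact.measure_lt_top.ne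
  have hcount := Measure.countable_meas_level_set_pos (μ := μ.restrict (tsupport f))
    hf.measurable
  obtain ⟨t, htI, htC⟩ : (Ioo a b \ {t | 0 < μ.restrict (tsupport f) {x | f x = t}}).Nonempty :=
    nonempty_of_not_subset fun hsub ↦
      hab.not_ge (Cardinal.Real.Ioo_countable_iff.1 (hcount.mono hsub))
  have hlevel : {x | f x = t} ⊆ tsupport f := fun x hx ↦
    subset_tsupport f (show f x ≠ 0 from hx ▸ (ha.trans_lt htI.1).ne')
  refine ⟨t, htI, ?_⟩
  rwa [mem_ofPred_eq, Measure.restrict_eq_self μ hlevel, pos_iff_ne_zero, not_not] at htC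

theorem stmt_13_general {G : Type*} [Group G] [TopologicalSpace G] [IsTopologicalGroup G]
    [LocallyCompactSpace G] [MeasurableSpace G] [BorelSpace G]
    (ν : Measure G) [ν.IsHaarMeasure]
    (U : Set G) (hUopen : IsOpen U) (hUone : (1 : G) ∈ U)
    (hUrc : IsCompact (closure U)) (n : ℕ) :
    ∃ K : Set G, IsCompact K ∧ K = closure (interior K) ∧
      U ^ n ⊆ K ∧ K ⊆ U ^ (n + 1) ∧ ν (frontier K) = 0 := by
  obtain ⟨f, hf1, hf0, hfc, -⟩ :=
    exists_continuous_one_zero_of_isCompact (isCompact_closure_pow hUopen hUone hUrc n)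
      (pow_succ U n ▸ hUopen.mul_left).isClosed_compl
      (disjoint_compl_right_iff_subset.2 (closure_pow_subset_pow_succ hUopen hUone n))
  obtain ⟨t, ⟨ht0, ht1⟩, hνt⟩ :=
    hfc.exists_mem_Ioo_measure_setOf_eq_eq_zero ν f.continuous le_rfl zero_lt_one
  have hopen : IsOpen {x | t < f x} := isOpen_lt continuous_const f.continuous
  refine ⟨closure {x | t < f x}, ?_, hopen.closure_interior_closure.symm, ?_, ?_, ?_⟩
  · exact hfc.isCompact.of_isClosed_subset isClosed_closure
      (closure_mono fun x hx ↦ (ht0.trans hx).ne')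
  · intro x hx
    exact subset_closure (show t < f x by rw [hf1 (subset_closure hx)]; exact ht1)
  · refine (closure_lt_subset_le continuous_const f.continuous).trans fun x hx ↦ ?_
    by_contra hxU
    have hfx : f x = 0 := hf0 hxU
    exact ((show t ≤ f x from hx).trans_eq hfx).not_gt ht0
  · refine measure_mono_null (frontier_closure_subset.trans ?_) hνt
    exact fun x hx ↦ (frontier_lt_subset_eq continuous_const f.continuous hx).symm

theorem stmt_13 {G : Type*} [Group G] [TopologicalSpace G] [IsTopologicalGroup G]
    [LocallyCompactSpace G] [MeasurableSpace G] [BorelSpace G]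
    (ν : Measure G) [ν.IsHaarMeasure]
    (U : Set G) (hUopen : IsOpen U) (hUone : (1 : G) ∈ U) (hUsymm : U⁻¹ = U)
    (hUrc : IsCompact (closure U)) (n : ℕ) :
    ∃ K : Set G, IsCompact K ∧ K = closure (interior K) ∧
      U ^ n ⊆ K ∧ K ⊆ U ^ (n + 1) ∧ ν (frontier K) = 0 :=
  stmt_13_general ν U hUopen hUone hUrc n
end

section
/- Let G be a topological group, U a symmetric open neighborhood of the identity, C a regular compact set (C = cl(int C)) whose interior C₀ is U-connected, and A ⊆ G with A ∩ C₀ ≠ ∅ and C \ cl(A) ≠ ∅. Then, with ν a Haar measure on G, ν(cl(A) ∩ C) < ν(A·U ∩ C). -/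
/-!
Since `U` is open, `closure A * U = A * U`; in particular `closure A ⊆ A * U`. If `A * U ∩ C₀` were
contained in `closure A`, then `closure A ∩ C₀` would be a proper nonempty subset of `C₀` with
`(closure A ∩ C₀) * U ∩ C₀ = closure A ∩ C₀`, against the `U`-connectedness of `C₀`. Hence the
open set `(A * U ∩ C₀) \ closure A` is nonempty, so it has positive Haar measure, and it lies in
`A * U ∩ C` but outside `closure A ∩ C`, whose measure is finite since `C` is compact.
-/

open MeasureTheory Set Pointwise

def IsUConnected {G : Type*} [Mul G] (U S : Set G) : Prop :=
  ¬ ∃ A : Set G, A ≠ ∅ ∧ A ≠ S ∧ A * U ∩ S = A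

theorem IsUConnected.nonempty_mul_inter_diff_closure {G : Type*} [Group G] [TopologicalSpace G]
    [IsTopologicalGroup G] {U S A : Set G} (hS : IsUConnected U S) (hU : IsOpen U)
    (hU1 : (1 : G) ∈ U) (hA : (A ∩ S).Nonempty) (hA' : (S \ closure A).Nonempty) :
    ((A * U ∩ S) \ closure A).Nonempty := by
  by_contra h
  rw [not_nonempty_iff_eq_empty, sdiff_eq_empty] at h
  refine hS ⟨closure A ∩ S, (hA.mono (inter_subset_inter_left _ subset_closure)).ne_empty, ?_, ?_⟩
  · obtain ⟨x, hxS, hxA⟩ := hA'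
    intro heq
    rw [← heq] at hxS
    exact hxA hxS.1
  · refine (subset_inter (subset_mul_left _ hU1) inter_subset_right).antisymm' ?_
    rintro x ⟨hxU, hxS⟩
    have hxAU : x ∈ A * U := hU.closure_mul A ▸ mul_subset_mul_right inter_subset_left hxU
    exact ⟨h ⟨hxAU, hxS⟩, hxS⟩

theorem measure_lt_of_subset_of_isOpen_subset_diff {X : Type*} [TopologicalSpace X]
    [MeasurableSpace X] [OpensMeasurableSpace X] {μ : Measure X} [μ.IsOpenPosMeasure]
    {s t W : Set X} (hs : μ s ≠ ⊤) (hst : s ⊆ t) (hW : IsOpen W) (hWne : W.Nonempty)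
    (hWt : W ⊆ t \ s) : μ s < μ t :=
  calc μ s < μ s + μ W := ENNReal.lt_add_right hs (hW.measure_ne_zero μ hWne)
    _ = μ (s ∪ W) := (measure_union (disjoint_sdiff_right.mono_right hWt) hW.measurableSet).symm
    _ ≤ μ t := measure_mono (union_subset hst (hWt.trans sdiff_subset))

theorem stmt_14_general {G : Type*} [Group G] [TopologicalSpace G] [IsTopologicalGroup G]
    [MeasurableSpace G] [BorelSpace G]
    (ν : Measure G) [ν.IsHaarMeasure]
    (U : Set G) (hUopen : IsOpen U) (hUone : (1 : G) ∈ U)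
    (C : Set G) (hCcomp : IsCompact C) (hCreg : C = closure (interior C))
    (hconn : ¬ ∃ A : Set G, A ≠ ∅ ∧ A ≠ interior C ∧ A * U ∩ interior C = A)
    (A : Set G) (hA : (A ∩ interior C).Nonempty) (hA' : (C \ closure A).Nonempty) :
    ν (closure A ∩ C) < ν (A * U ∩ C) := by
  have hC₀ : (interior C \ closure A).Nonempty := by
    rw [hCreg] at hA'
    exact closure_nonempty_iff.mp (hA'.mono (by simpa using closure_sdiff (t := closure A)))
  have hW := IsUConnected.nonempty_mul_inter_diff_closure hconn hUopen hUone hA hC₀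
  have hclosure : closure A ⊆ A * U := (subset_mul_left _ hUone).trans (hUopen.closure_mul A).subset
  refine measure_lt_of_subset_of_isOpen_subset_diff
    ((measure_mono inter_subset_right).trans_lt hCcomp.measure_lt_top).ne
    (inter_subset_inter_left _ hclosure)
    ((hUopen.mul_left.inter isOpen_interior).sdiff isClosed_closure) hW ?_
  rintro x ⟨⟨hxAU, hxC⟩, hxA⟩
  exact ⟨⟨hxAU, interior_subset hxC⟩, fun hx => hxA hx.1⟩

theorem stmt_14 {G : Type*} [Group G] [TopologicalSpace G] [IsTopologicalGroup G]
    [LocallyCompactSpace G] [MeasurableSpace G] [BorelSpace G]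
    (ν : Measure G) [ν.IsHaarMeasure]
    (U : Set G) (hUopen : IsOpen U) (hUone : (1 : G) ∈ U) (hUsymm : U⁻¹ = U)
    (C : Set G) (hCcomp : IsCompact C) (hCreg : C = closure (interior C))
    (hconn : ¬ ∃ A : Set G, A ≠ ∅ ∧ A ≠ interior C ∧ A * U ∩ interior C = A)
    (A : Set G) (hA : (A ∩ interior C).Nonempty) (hA' : (C \ closure A).Nonempty) :
    ν (closure A ∩ C) < ν (A * U ∩ C) :=
  stmt_14_general ν U hUopen hUone C hCcomp hCreg hconn A hA hA'
end
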